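/- arXiv:2306.16690 — 6 statements merged into one kernel-verified Lean document; each statement's English description precedes it below -/
import Mathlib

section
/- For a weight w on [0,1] (a positive measurable function), setting ⦃w⦄_{A₂} = sup_{J⊆[0,1]} inf_{c∈ℝ} ⟨e^{|log w − c|}⟩_J and [w]_{A₂} = sup_{J⊆[0,1]} ⟨w⟩_J ⟨w^{−1}⟩_J, one has √([w]_{A₂}) ≤ ⦃w⦄_{A₂} ≤ 2[w]_{A₂}. -/
open MeasureTheory Set Filter Topology
open scoped ENNReal

noncomputable section

/-- Lebesgue average of a (nonnegative-valued, via `ENNReal.ofReal`) function over `J`. -/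
def avg (J : Set ℝ) (f : ℝ → ℝ) : ℝ≥0∞ :=
  (volume J)⁻¹ * ∫⁻ x in J, ENNReal.ofReal (f x)

/-- `V_c(φ, J) = ⟨Q(φ - c)⟩_J`. -/
def Vc (Q φ : ℝ → ℝ) (J : Set ℝ) (c : ℝ) : ℝ≥0∞ :=
  avg J (fun x => Q (φ x - c))

/-- `V(φ, J) = inf_c V_c(φ, J)`. -/
def V (Q φ : ℝ → ℝ) (J : Set ℝ) : ℝ≥0∞ :=
  ⨅ c : ℝ, Vc Q φ J c

/-- `W(φ, J) = sup { V(φ, L) : L ⊆ J an interval }`. -/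
def W (Q φ : ℝ → ℝ) (J : Set ℝ) : ℝ≥0∞ :=
  ⨆ (a : ℝ) (b : ℝ) (_ : Icc a b ⊆ J), V Q φ (Icc a b)

/-- Decreasing rearrangement of `f : [0,1] → ℝ`:
`f*(t) = inf {λ : |{s ∈ [0,1] : f(s) > λ}| ≤ t}`. -/
def decRe (f : ℝ → ℝ) (t : ℝ) : ℝ :=
  sInf {l : ℝ | volume {s ∈ Icc (0:ℝ) 1 | l < f s} ≤ ENNReal.ofReal t}

/-- `𝒞(φ, J)`: the minimizer of `c ↦ V_c(φ, J)` (when it exists). -/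
def CC (Q φ : ℝ → ℝ) (J : Set ℝ) : ℝ :=
  Classical.epsilon (fun c => ∀ c', Vc Q φ J c ≤ Vc Q φ J c')

/-- `α`-concatenation of `φ₋ : [a₋,b₋] → ℝ` and `φ₊ : [a₊,b₊] → ℝ`, as a function on `[0,1]`. -/
def concat (φm φp : ℝ → ℝ) (am bm ap bp α : ℝ) : ℝ → ℝ :=
  fun s => if s < α then φm (am + (bm - am) * (s / α))
           else φp (ap + (bp - ap) * ((s - α) / (1 - α)))

/-- `⦃w⦄_{A₂} = sup_J inf_c ⟨e^{|log w - c|}⟩_J`. -/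
def catwo (w : ℝ → ℝ) : ℝ≥0∞ :=
  ⨆ (a : ℝ) (b : ℝ) (_ : Icc a b ⊆ Icc (0:ℝ) 1),
    ⨅ c : ℝ, avg (Icc a b) (fun x => Real.exp |Real.log (w x) - c|)

/-- `[w]_{A₂} = sup_J ⟨w⟩_J ⟨w⁻¹⟩_J`. -/
def a2char (w : ℝ → ℝ) : ℝ≥0∞ :=
  ⨆ (a : ℝ) (b : ℝ) (_ : Icc a b ⊆ Icc (0:ℝ) 1),
    avg (Icc a b) w * avg (Icc a b) (fun x => (w x)⁻¹)

/-!
For every `c`, `w ≤ e^c e^{|log w - c|}` and `w⁻¹ ≤ e^{-c} e^{|log w - c|}`; multiplying the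
averages of these bounds gives `⟨w⟩_J ⟨w⁻¹⟩_J ≤ ⟨e^{|log w - c|}⟩_J²`. Conversely, for
`c = log ⟨w⟩_J` one has `e^{|log w - c|} ≤ w / ⟨w⟩_J + ⟨w⟩_J / w`, whose average is
`1 + ⟨w⟩_J ⟨w⁻¹⟩_J`, and this is at most `2 ⟨w⟩_J ⟨w⁻¹⟩_J` because `⟨w⟩_J ⟨w⁻¹⟩_J ≥ 1` by
Cauchy–Schwarz applied to `1 = w^{1/2} w^{-1/2}`.
-/

namespace Real

lemma le_exp_mul_exp_abs_log_sub {x : ℝ} (hx : 0 < x) (c : ℝ) :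
    x ≤ exp c * exp |log x - c| := by
  rw [← exp_add]
  calc x = exp (log x) := (exp_log hx).symm
    _ ≤ exp (c + |log x - c|) := exp_le_exp.2 (by linarith [le_abs_self (log x - c)])

lemma inv_le_exp_neg_mul_exp_abs_log_sub {x : ℝ} (hx : 0 < x) (c : ℝ) :
    x⁻¹ ≤ exp (-c) * exp |log x - c| := by
  have := le_exp_mul_exp_abs_log_sub (inv_pos.2 hx) (-c)
  rwa [log_inv, show -log x - -c = -(log x - c) by ring, abs_neg] at this

lemma exp_abs_log_sub_log_le {x t : ℝ} (hx : 0 < x) (ht : 0 < t) :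
    exp |log x - log t| ≤ x / t + t / x := by
  have hxt : exp (log x - log t) = x / t := by rw [exp_sub, exp_log hx, exp_log ht]
  have htx : exp (-(log x - log t)) = t / x := by rw [exp_neg, hxt, inv_div]
  rcases abs_cases (log x - log t) with ⟨h, _⟩ | ⟨h, _⟩
  · rw [h, hxt]; linarith [div_pos ht hx]
  · rw [h, htx]; linarith [div_pos hx ht]

end Real

open Real

section Average

variable {J : Set ℝ}

lemma avg_mono (hJ : MeasurableSet J) {f g : ℝ → ℝ} (h : ∀ x ∈ J, f x ≤ g x) :
    avg J f ≤ avg J g :=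
  mul_le_mul_right (setLIntegral_mono' hJ fun x hx => ENNReal.ofReal_le_ofReal (h x hx)) _

lemma avg_const_mul {r : ℝ} (hr : 0 ≤ r) {f : ℝ → ℝ} :
    avg J (fun x => r * f x) = ENNReal.ofReal r * avg J f := by
  simp_rw [avg, ENNReal.ofReal_mul hr]
  rw [lintegral_const_mul' _ _ ENNReal.ofReal_ne_top, mul_left_comm]

lemma avg_add (hJ : MeasurableSet J) {f g : ℝ → ℝ} (hf : Measurable f)
    (hf0 : ∀ x ∈ J, 0 ≤ f x) (hg0 : ∀ x ∈ J, 0 ≤ g x) :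
    avg J (fun x => f x + g x) = avg J f + avg J g := by
  rw [avg, avg, avg, ← mul_add, ← lintegral_add_left hf.ennreal_ofReal,
    setLIntegral_congr_fun hJ fun x hx => ENNReal.ofReal_add (hf0 x hx) (hg0 x hx)]

lemma avg_eq_zero_of_volume (h : volume J = 0 ∨ volume J = ∞) (f : ℝ → ℝ) : avg J f = 0 := by
  rcases h with h | h
  · simp [avg, Measure.restrict_eq_zero.2 h]
  · simp [avg, h]

variable {w : ℝ → ℝ}

lemma avg_mul_avg_inv_le_sq (hJ : MeasurableSet J) (hpos : ∀ x ∈ J, 0 < w x) (c : ℝ) :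
    avg J w * avg J (fun x => (w x)⁻¹) ≤ avg J (fun x => exp |log (w x) - c|) ^ 2 := by
  set E := avg J (fun x => exp |log (w x) - c|)
  calc avg J w * avg J (fun x => (w x)⁻¹)
      ≤ (ENNReal.ofReal (exp c) * E) * (ENNReal.ofReal (exp (-c)) * E) := by
        gcongr
        · rw [← avg_const_mul (exp_nonneg c)]
          exact avg_mono hJ fun x hx => le_exp_mul_exp_abs_log_sub (hpos x hx) c
        · rw [← avg_const_mul (exp_nonneg (-c))]
          exact avg_mono hJ fun x hx => inv_le_exp_neg_mul_exp_abs_log_sub (hpos x hx) c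
    _ = E ^ 2 := by
        rw [mul_mul_mul_comm, ← ENNReal.ofReal_mul (exp_nonneg c), ← exp_add, add_neg_cancel,
          exp_zero, ENNReal.ofReal_one, one_mul, sq]

lemma rpow_half_avg_mul_avg_inv_le_iInf (hJ : MeasurableSet J) (hpos : ∀ x ∈ J, 0 < w x) :
    (avg J w * avg J (fun x => (w x)⁻¹)) ^ (1 / 2 : ℝ)
      ≤ ⨅ c : ℝ, avg J (fun x => exp |log (w x) - c|) :=
  le_iInf fun c => by
    rw [one_div, ENNReal.rpow_inv_le_iff two_pos, ENNReal.rpow_two]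
    exact avg_mul_avg_inv_le_sq hJ hpos c

lemma one_le_avg_mul_avg_inv (hJ : MeasurableSet J) (h0 : volume J ≠ 0) (htop : volume J ≠ ∞)
    (hw : Measurable w) (hpos : ∀ x ∈ J, 0 < w x) :
    1 ≤ avg J w * avg J (fun x => (w x)⁻¹) := by
  set X := ∫⁻ x in J, ENNReal.ofReal (w x)
  set Y := ∫⁻ x in J, ENNReal.ofReal (w x)⁻¹
  have hvol : volume J ≤ X ^ (1 / 2 : ℝ) * Y ^ (1 / 2 : ℝ) :=
    calc volume J
        = ∫⁻ x in J, ENNReal.ofReal (w x) ^ (1 / 2 : ℝ) * ENNReal.ofReal (w x)⁻¹ ^ (1 / 2 : ℝ) := by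
          rw [← setLIntegral_one]
          refine setLIntegral_congr_fun hJ fun x hx => ?_
          rw [← ENNReal.mul_rpow_of_nonneg _ _ (by norm_num), ← ENNReal.ofReal_mul (hpos x hx).le,
            mul_inv_cancel₀ (hpos x hx).ne', ENNReal.ofReal_one, ENNReal.one_rpow]
      _ ≤ X ^ (1 / 2 : ℝ) * Y ^ (1 / 2 : ℝ) :=
          ENNReal.lintegral_mul_norm_pow_le hw.ennreal_ofReal.aemeasurable
            hw.inv.ennreal_ofReal.aemeasurable (by norm_num) (by norm_num) (by norm_num)
  rw [← ENNReal.mul_rpow_of_nonneg _ _ (by norm_num), one_div,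
    ENNReal.le_rpow_inv_iff two_pos, ENNReal.rpow_two] at hvol
  calc 1 ≤ X * Y / volume J ^ 2 := by
        rwa [ENNReal.le_div_iff_mul_le (by simp [h0]) (by simp [htop]), one_mul]
    _ = avg J w * avg J (fun x => (w x)⁻¹) := by
        rw [avg, avg, ENNReal.div_eq_inv_mul, sq, ENNReal.mul_inv (by simp [h0]) (by simp [h0])]
        ring

lemma avg_exp_abs_log_sub_log_avg_le (hJ : MeasurableSet J) (hw : Measurable w)
    (hpos : ∀ x ∈ J, 0 < w x) (hA0 : avg J w ≠ 0) (hAtop : avg J w ≠ ∞) :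
    avg J (fun x => exp |log (w x) - log (avg J w).toReal|)
      ≤ 1 + avg J w * avg J (fun x => (w x)⁻¹) := by
  set t := (avg J w).toReal
  have ht : 0 < t := ENNReal.toReal_pos hA0 hAtop
  calc avg J (fun x => exp |log (w x) - log t|)
      ≤ avg J (fun x => t⁻¹ * w x + t * (w x)⁻¹) :=
        avg_mono hJ fun x hx => (exp_abs_log_sub_log_le (hpos x hx) ht).trans_eq (by ring)
    _ = ENNReal.ofReal t⁻¹ * avg J w + ENNReal.ofReal t * avg J (fun x => (w x)⁻¹) := by
        rw [avg_add hJ (hw.const_mul _) (fun x hx => by have := hpos x hx; positivity)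
            (fun x hx => by have := hpos x hx; positivity),
          avg_const_mul (inv_nonneg.2 ht.le), avg_const_mul ht.le]
    _ = 1 + avg J w * avg J (fun x => (w x)⁻¹) := by
        rw [ENNReal.ofReal_inv_of_pos ht, ENNReal.ofReal_toReal hAtop,
          ENNReal.inv_mul_cancel hA0 hAtop]

lemma iInf_avg_exp_abs_log_sub_le (hJ : MeasurableSet J) (hw : Measurable w)
    (hpos : ∀ x ∈ J, 0 < w x) :
    ⨅ c : ℝ, avg J (fun x => exp |log (w x) - c|)
      ≤ 2 * (avg J w * avg J (fun x => (w x)⁻¹)) := by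
  by_cases hdeg : volume J = 0 ∨ volume J = ∞
  · simp [avg_eq_zero_of_volume hdeg]
  rw [not_or] at hdeg
  have hAB := one_le_avg_mul_avg_inv hJ hdeg.1 hdeg.2 hw hpos
  have hA0 : avg J w ≠ 0 := by rintro h; simp [h] at hAB
  rcases eq_or_ne (avg J w) ∞ with hAtop | hAtop
  · have hB0 : avg J (fun x => (w x)⁻¹) ≠ 0 := by rintro h; simp [h] at hAB
    simp [hAtop, hB0]
  calc ⨅ c : ℝ, avg J (fun x => exp |log (w x) - c|)
      ≤ avg J (fun x => exp |log (w x) - log (avg J w).toReal|) := iInf_le _ _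
    _ ≤ 1 + avg J w * avg J (fun x => (w x)⁻¹) :=
        avg_exp_abs_log_sub_log_avg_le hJ hw hpos hA0 hAtop
    _ ≤ 2 * (avg J w * avg J (fun x => (w x)⁻¹)) := by rw [two_mul]; gcongr

end Average

theorem stmt1 (w : ℝ → ℝ) (hw : Measurable w) (hwpos : ∀ x ∈ Icc (0:ℝ) 1, 0 < w x) :
    a2char w ^ (1/2 : ℝ) ≤ catwo w ∧ catwo w ≤ 2 * a2char w := by
  have le_catwo {a b : ℝ} (hJ : Icc a b ⊆ Icc 0 1) :
      ⨅ c : ℝ, avg (Icc a b) (fun x => exp |log (w x) - c|) ≤ catwo w :=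
    le_iSup_of_le a <| le_iSup₂_of_le b hJ le_rfl
  have le_a2char {a b : ℝ} (hJ : Icc a b ⊆ Icc 0 1) :
      avg (Icc a b) w * avg (Icc a b) (fun x => (w x)⁻¹) ≤ a2char w :=
    le_iSup_of_le a <| le_iSup₂_of_le b hJ le_rfl
  constructor
  · rw [one_div, ENNReal.rpow_inv_le_iff two_pos]
    refine iSup₂_le fun a b => iSup_le fun hJ => ?_
    rw [← ENNReal.rpow_inv_le_iff two_pos, ← one_div]
    exact (rpow_half_avg_mul_avg_inv_le_iInf measurableSet_Icc
      fun x hx => hwpos x (hJ hx)).trans (le_catwo hJ)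
  · refine iSup₂_le fun a b => iSup_le fun hJ => ?_
    exact (iInf_avg_exp_abs_log_sub_le measurableSet_Icc hw fun x hx => hwpos x (hJ hx)).trans
      (mul_le_mul_right (le_a2char hJ) 2)
end
end

section
/- Let Q : ℝ → [0,∞) be a strictly convex even function and φ a measurable function on an interval J. If the set A = {c ∈ ℝ : ⟨Q(φ−c)⟩_J < ∞} is nonempty, then there is a unique c ∈ ℝ minimizing c ↦ ⟨Q(φ−c)⟩_J over ℝ. -/
/-!
Write `F c = ∫_J Q (φ - c)`. By Fatou's lemma `F` is lower semicontinuous. Being even and convex,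
`Q` is increasing in `|t|`, and strict convexity makes it tend to `∞`; hence on a set of positive
measure where `|φ| ≤ R` we get `F c ≥ Q (|c| - R) · |{|φ| ≤ R}| → ∞`. So `F` attains its minimum
on a compact set outside which it exceeds a finite value `F c₀`. Strict convexity of `Q` gives
`2 F ((c₁ + c₂) / 2) < F c₁ + F c₂` for finite `F c₁`, `F c₂` with `c₁ ≠ c₂`, which rules out two
distinct minimizers.
-/

open MeasureTheory Set Filter Topology
open scoped ENNReal

noncomputable section

section EvenConvex

variable {Q : ℝ → ℝ}

theorem ConvexOn.le_of_abs_le_of_even (hQ : ConvexOn ℝ univ Q) (hQe : ∀ t, Q (-t) = Q t)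
    {s t : ℝ} (hst : |s| ≤ |t|) : Q s ≤ Q t := by
  have hmem : s ∈ segment ℝ (-|t|) |t| := by
    rw [segment_eq_Icc (by linarith [abs_nonneg t])]
    exact abs_le.mp hst
  have hQabs : Q |t| = Q t := by
    obtain h | h := abs_choice t <;> simp only [h, hQe]
  simpa [hQe, hQabs] using hQ.le_on_segment (mem_univ _) (mem_univ _) hmem

theorem StrictConvexOn.two_mul_midpoint_lt (hQ : StrictConvexOn ℝ univ Q) {s t : ℝ}
    (hst : s ≠ t) : 2 * Q ((s + t) / 2) < Q s + Q t := by
  have h := hQ.2 (mem_univ s) (mem_univ t) hst (by norm_num : (0:ℝ) < 1 / 2)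
    (by norm_num : (0:ℝ) < 1 / 2) (by norm_num)
  simp only [smul_eq_mul] at h
  rw [show (s + t) / 2 = 1 / 2 * s + 1 / 2 * t by ring]
  linarith

theorem StrictConvexOn.tendsto_atTop_of_even (hQ : StrictConvexOn ℝ univ Q)
    (hQe : ∀ t, Q (-t) = Q t) : Tendsto Q atTop atTop := by
  have hslope : 0 < Q 1 - Q 0 := by
    have := hQ.two_mul_midpoint_lt (show (-1 : ℝ) ≠ 1 by norm_num)
    norm_num [hQe] at this
    linarith
  have hlin : Tendsto (fun t : ℝ => Q 1 + (t - 1) * (Q 1 - Q 0)) atTop atTop :=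
    tendsto_atTop_add_const_left _ _
      ((tendsto_atTop_add_const_right atTop (-1) tendsto_id).atTop_mul_const hslope)
  refine tendsto_atTop_mono' atTop ?_ hlin
  filter_upwards [eventually_gt_atTop (1:ℝ)] with t ht
  have h := hQ.convexOn.slope_mono_adjacent (mem_univ 0) (mem_univ t) one_pos ht
  rw [sub_zero, div_one, le_div_iff₀ (by linarith)] at h
  linarith

end EvenConvex

theorem LowerSemicontinuous.exists_forall_le_of_eventually_le {α β : Type*}
    [TopologicalSpace α] [LinearOrder β] {f : α → β} (hf : LowerSemicontinuous f) {x₀ : α}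
    (hx₀ : ∀ᶠ x in cocompact α, f x₀ ≤ f x) : ∃ x, ∀ y, f x ≤ f y := by
  obtain ⟨K, hK, hKc⟩ := mem_cocompact.mp hx₀
  obtain ⟨x, hx, hmin⟩ := (hf.lowerSemicontinuousOn _).exists_isMinOn
    (insert_nonempty x₀ K) (hK.insert x₀)
  refine ⟨x, fun y => ?_⟩
  by_cases hy : y ∈ K
  · exact hmin (mem_insert_of_mem x₀ hy)
  · exact (hmin (mem_insert x₀ K)).trans (hKc hy)

section DeviationIntegral

variable {α : Type*} [MeasurableSpace α]

def deviationIntegral (Q : ℝ → ℝ) (φ : α → ℝ) (μ : Measure α) (c : ℝ) : ℝ≥0∞ :=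
  ∫⁻ x, ENNReal.ofReal (Q (φ x - c)) ∂μ

variable {Q : ℝ → ℝ} {φ : α → ℝ} {μ : Measure α}

theorem measurable_ofReal_comp_sub (hQ : Continuous Q) (hφ : Measurable φ) (c : ℝ) :
    Measurable fun x => ENNReal.ofReal (Q (φ x - c)) :=
  (hQ.measurable.comp (hφ.sub measurable_const)).ennreal_ofReal

theorem lowerSemicontinuous_deviationIntegral (hQ : Continuous Q) (hφ : Measurable φ) :
    LowerSemicontinuous (deviationIntegral Q φ μ) := by
  refine lowerSemicontinuous_iff_le_liminf.mpr fun c => ?_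
  calc deviationIntegral Q φ μ c
      = ∫⁻ x, liminf (fun c' => ENNReal.ofReal (Q (φ x - c'))) (𝓝 c) ∂μ := by
        refine lintegral_congr fun x => (Tendsto.liminf_eq ?_).symm
        exact ENNReal.continuous_ofReal.tendsto _ |>.comp
          ((hQ.tendsto _).comp (tendsto_const_nhds.sub tendsto_id))
    _ ≤ liminf (deviationIntegral Q φ μ) (𝓝 c) :=
        lintegral_liminf_le (measurable_ofReal_comp_sub hQ hφ)

theorem tendsto_deviationIntegral_cocompact [NeZero μ] (hQ : ConvexOn ℝ univ Q)
    (hQe : ∀ t, Q (-t) = Q t) (hQtop : Tendsto Q atTop atTop) (hφ : Measurable φ) :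
    Tendsto (deviationIntegral Q φ μ) (cocompact ℝ) (𝓝 ⊤) := by
  obtain ⟨R, hR⟩ : ∃ R : ℝ, μ {x | |φ x| ≤ R} ≠ 0 := by
    by_contra! h
    have hcover : (univ : Set α) ⊆ ⋃ n : ℕ, {x | |φ x| ≤ n} :=
      fun x _ => mem_iUnion.mpr (exists_nat_ge |φ x|)
    exact NeZero.ne μ (Measure.measure_univ_eq_zero.mp
      (measure_mono_null hcover (measure_iUnion_null fun n => h n)))
  have hlow : ∀ c : ℝ, R ≤ |c| →
      ENNReal.ofReal (Q (|c| - R)) * μ {x | |φ x| ≤ R} ≤ deviationIntegral Q φ μ c := by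
    intro c hc
    refine le_trans (mul_le_mul_right (measure_mono fun x (hx : |φ x| ≤ R) => ?_) _)
      (mul_meas_ge_le_lintegral₀
        (measurable_ofReal_comp_sub hQ.locallyLipschitz.continuous hφ c).aemeasurable _)
    refine ENNReal.ofReal_le_ofReal (hQ.le_of_abs_le_of_even hQe ?_)
    rw [abs_of_nonneg (sub_nonneg.mpr hc)]
    linarith [abs_sub_abs_le_abs_sub c (φ x), abs_sub_comm c (φ x)]
  have hlim : Tendsto (fun c : ℝ => ENNReal.ofReal (Q (|c| - R)) * μ {x | |φ x| ≤ R})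
      (cocompact ℝ) (𝓝 ⊤) := by
    have h := ENNReal.Tendsto.mul_const (ENNReal.tendsto_ofReal_atTop.comp (hQtop.comp
      (tendsto_atTop_add_const_right _ (-R) (tendsto_norm_cocompact_atTop (E := ℝ)))))
      (Or.inl ENNReal.top_ne_zero) (b := μ {x | |φ x| ≤ R})
    rwa [ENNReal.top_mul hR] at h
  refine tendsto_nhds_top_mono hlim ?_
  filter_upwards [tendsto_norm_cocompact_atTop.eventually_ge_atTop R] with c hc
  exact hlow c hc

theorem two_mul_deviationIntegral_midpoint_lt [NeZero μ] (hQ : StrictConvexOn ℝ univ Q)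
    (hQ0 : ∀ t, 0 ≤ Q t) (hφ : Measurable φ) {c₁ c₂ : ℝ} (hc : c₁ ≠ c₂)
    (h₁ : deviationIntegral Q φ μ c₁ ≠ ⊤) (h₂ : deviationIntegral Q φ μ c₂ ≠ ⊤) :
    2 * deviationIntegral Q φ μ ((c₁ + c₂) / 2) <
      deviationIntegral Q φ μ c₁ + deviationIntegral Q φ μ c₂ := by
  have hmeas := measurable_ofReal_comp_sub hQ.convexOn.locallyLipschitz.continuous hφ
  have hpt : ∀ x, 2 * ENNReal.ofReal (Q (φ x - (c₁ + c₂) / 2)) <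
      ENNReal.ofReal (Q (φ x - c₁)) + ENNReal.ofReal (Q (φ x - c₂)) := by
    intro x
    have h := hQ.two_mul_midpoint_lt (show φ x - c₁ ≠ φ x - c₂ from fun h => hc (by linarith))
    rw [show (φ x - c₁ + (φ x - c₂)) / 2 = φ x - (c₁ + c₂) / 2 by ring] at h
    rw [← ENNReal.ofReal_add (hQ0 _) (hQ0 _), ← ENNReal.ofReal_ofNat 2,
      ← ENNReal.ofReal_mul zero_le_two]
    exact (ENNReal.ofReal_lt_ofReal_iff (by linarith [hQ0 (φ x - (c₁ + c₂) / 2)])).mpr h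
  have hsum : ∫⁻ x, ENNReal.ofReal (Q (φ x - c₁)) + ENNReal.ofReal (Q (φ x - c₂)) ∂μ =
      deviationIntegral Q φ μ c₁ + deviationIntegral Q φ μ c₂ :=
    lintegral_add_left (hmeas c₁) _
  calc 2 * deviationIntegral Q φ μ ((c₁ + c₂) / 2)
      = ∫⁻ x, 2 * ENNReal.ofReal (Q (φ x - (c₁ + c₂) / 2)) ∂μ :=
        (lintegral_const_mul' _ _ ENNReal.ofNat_ne_top).symm
    _ < ∫⁻ x, ENNReal.ofReal (Q (φ x - c₁)) + ENNReal.ofReal (Q (φ x - c₂)) ∂μ :=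
        lintegral_strict_mono (NeZero.ne μ) ((hmeas c₁).add (hmeas c₂)).aemeasurable
          (ne_top_of_le_ne_top (hsum ▸ ENNReal.add_ne_top.mpr ⟨h₁, h₂⟩)
            (lintegral_mono fun x => (hpt x).le)) (ae_of_all _ hpt)
    _ = deviationIntegral Q φ μ c₁ + deviationIntegral Q φ μ c₂ := hsum

theorem existsUnique_forall_deviationIntegral_le [NeZero μ] (hQ : StrictConvexOn ℝ univ Q)
    (hQe : ∀ t, Q (-t) = Q t) (hQ0 : ∀ t, 0 ≤ Q t) (hφ : Measurable φ)
    (hfin : ∃ c, deviationIntegral Q φ μ c ≠ ⊤) :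
    ∃! c, ∀ c', deviationIntegral Q φ μ c ≤ deviationIntegral Q φ μ c' := by
  obtain ⟨c₀, hc₀⟩ := hfin
  have hcoercive := tendsto_deviationIntegral_cocompact (μ := μ)
    hQ.convexOn hQe (hQ.tendsto_atTop_of_even hQe) hφ
  obtain ⟨c, hc⟩ := (lowerSemicontinuous_deviationIntegral
    hQ.convexOn.locallyLipschitz.continuous hφ).exists_forall_le_of_eventually_le
      (hcoercive.eventually_const_le hc₀.lt_top)
  refine ⟨c, hc, fun c' hc' => by_contra fun hne => ?_⟩
  have hmid := two_mul_deviationIntegral_midpoint_lt hQ hQ0 hφ hne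
    (ne_top_of_le_ne_top hc₀ (hc' c₀)) (ne_top_of_le_ne_top hc₀ (hc c₀))
  exact hmid.not_ge (by rw [two_mul]; exact add_le_add (hc' _) (hc _))

end DeviationIntegral

theorem stmt3 (Q : ℝ → ℝ) (hQ : StrictConvexOn ℝ univ Q) (hQe : ∀ t, Q (-t) = Q t)
    (hQ0 : ∀ t, 0 ≤ Q t) (φ : ℝ → ℝ) (hφ : Measurable φ) (a b : ℝ) (hab : a < b)
    (hA : ∃ c : ℝ, Vc Q φ (Icc a b) c < ⊤) :
    ∃! c : ℝ, ∀ c' : ℝ, Vc Q φ (Icc a b) c ≤ Vc Q φ (Icc a b) c' := by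
  have hJ : volume (Icc a b) ≠ 0 := by simpa [Real.volume_Icc] using hab
  have hJinv : (volume (Icc a b))⁻¹ ≠ 0 := ENNReal.inv_ne_zero.mpr measure_Icc_lt_top.ne
  have : NeZero (volume.restrict (Icc a b)) := ⟨by simpa using hJ⟩
  have hVc : ∀ c, Vc Q φ (Icc a b) c =
      (volume (Icc a b))⁻¹ * deviationIntegral Q φ (volume.restrict (Icc a b)) c := fun _ => rfl
  obtain ⟨c₀, hc₀⟩ := hA
  simp_rw [hVc, ENNReal.mul_le_mul_iff_right hJinv (ENNReal.inv_ne_top.mpr hJ)]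
  refine existsUnique_forall_deviationIntegral_le hQ hQe hQ0 hφ ⟨c₀, fun h => ?_⟩
  rw [hVc, h, ENNReal.mul_top hJinv] at hc₀
  exact lt_irrefl _ hc₀
end
end

section
/- Splitting Lemma: Let Q : ℝ → [0,∞) be strictly convex and even, 0 < ε̃ < ε, and 0 < δ < min(1/2, 1 − Q(ε̃)/Q(ε)). If φ is a measurable function on J = [a,b] with W(φ,J) ≤ Q(ε̃), then there exists t ∈ (δ, 1−δ) such that, writing J₋ = [a, (1−t)a+tb], J₊ = [(1−t)a+tb, b], and φ± = φ restricted to J±, the α-concatenation φ_α satisfies V(φ_α, [0,1]) ≤ Q(ε) for all α ∈ [0,1]. -/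
open MeasureTheory Set Filter Topology
open scoped ENNReal

noncomputable section

/-! Choose `c` with `V_c(φ, J) < Q(ε) (1 - d)` for some `d ∈ (δ, 1/2)`; this is possible because
`V(φ, J) ≤ W(φ, J) ≤ Q(ε̃)` and `Q(ε̃) / Q(ε) < 1 - d`. Applying the intermediate value theorem to
the primitive of `Q(φ - c)` yields a cut `t ∈ [d, 1 - d]` after which both pieces have
`Q(φ - c)`-average at most `Q(ε)`. An affine change of variables shows that `V_c` of the
`α`-concatenation is `α V_c(φ₋) + (1 - α) V_c(φ₊)`, so the same `c` gives `V(φ_α) ≤ Q(ε)` for every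
`α`. -/

theorem StrictConvexOn.lt_of_abs_lt_of_even {Q : ℝ → ℝ} (hQ : StrictConvexOn ℝ univ Q)
    (hQe : ∀ t, Q (-t) = Q t) {x y : ℝ} (h : |x| < y) : Q x < Q y := by
  have hy : -y < y := by linarith [abs_nonneg x]
  have hx : x ∈ openSegment ℝ (-y) y := by rw [openSegment_eq_Ioo hy]; exact abs_lt.mp h
  simpa [hQe] using hQ.lt_on_openSegment (mem_univ _) (mem_univ _) hy.ne hx

theorem V_le_W (Q φ : ℝ → ℝ) {J : Set ℝ} {u v : ℝ} (h : Icc u v ⊆ J) :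
    V Q φ (Icc u v) ≤ W Q φ J :=
  le_iSup₂_of_le u v (le_iSup (fun _ : Icc u v ⊆ J => V Q φ (Icc u v)) h)

theorem setLIntegral_Ico_comp_affine (G : ℝ → ℝ≥0∞) {a b u v : ℝ} (hab : a < b)
    (huv : u ≤ v) :
    ∫⁻ s in Ico u v, G (a + (b - a) * ((s - u) / (v - u)))
      = ENNReal.ofReal (v - u) * (volume (Icc a b))⁻¹ * ∫⁻ x in Icc a b, G x := by
  rcases huv.eq_or_lt with rfl | huv
  · simp only [Ico_self, Measure.restrict_empty, lintegral_zero_measure, sub_self,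
      ENNReal.ofReal_zero, zero_mul]
  set L := (b - a) / (v - u) with hL_def
  clear_value L
  have hL : 0 < L := hL_def ▸ div_pos (sub_pos.2 hab) (sub_pos.2 huv)
  have himage : (L * · + (a - L * u)) '' Icc u v = Icc a b := by
    have hLv : L * (v - u) = b - a := hL_def ▸ div_mul_cancel₀ _ (sub_pos.2 huv).ne'
    rw [image_affine_Icc' hL]
    congr 1
    · ring
    · linear_combination hLv
  have hcov := lintegral_image_eq_lintegral_abs_deriv_mul (s := Icc u v) measurableSet_Icc
    (fun s _ => ((hasDerivAt_id' s).const_mul L |>.add_const (a - L * u)).hasDerivWithinAt)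
    (fun s _ t _ hst => by simpa [hL.ne'] using hst) G
  simp only [mul_one, abs_of_pos hL, himage] at hcov
  rw [lintegral_const_mul' _ _ ENNReal.ofReal_ne_top] at hcov
  have hscale : ENNReal.ofReal (v - u) * (volume (Icc a b))⁻¹ * ENNReal.ofReal L = 1 := by
    rw [Real.volume_Icc, ← ENNReal.ofReal_inv_of_pos (sub_pos.2 hab), ← ENNReal.ofReal_mul
      (sub_pos.2 huv).le, ← ENNReal.ofReal_mul (by positivity), hL_def, mul_div_assoc', inv_mul_cancel_right₀ (sub_pos.2 hab).ne', div_self (sub_pos.2 huv).ne',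
      ENNReal.ofReal_one]
  rw [hcov, ← mul_assoc, hscale, one_mul, setLIntegral_congr Ico_ae_eq_Icc]
  congr! 3 with s
  rw [hL_def]
  ring

theorem Vc_concat (Q φm φp : ℝ → ℝ) {am bm ap bp α : ℝ} (hm : am < bm) (hp : ap < bp)
    (hα : α ∈ Icc (0 : ℝ) 1) (c : ℝ) :
    Vc Q (concat φm φp am bm ap bp α) (Icc 0 1) c
      = ENNReal.ofReal α * Vc Q φm (Icc am bm) c
        + ENNReal.ofReal (1 - α) * Vc Q φp (Icc ap bp) c := by
  set ψ := concat φm φp am bm ap bp α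
  -- Half-open pieces make the cases `α = 0, 1` empty pieces, with weight `ofReal 0 * ⊤ = 0`.
  have hleft : ∫⁻ s in Ico 0 α, ENNReal.ofReal (Q (ψ s - c))
      = ENNReal.ofReal α * Vc Q φm (Icc am bm) c := by
    have hcov := setLIntegral_Ico_comp_affine (fun x => ENNReal.ofReal (Q (φm x - c))) hm hα.1
    simp only [sub_zero] at hcov
    rw [Vc, avg, ← mul_assoc, ← hcov]
    exact setLIntegral_congr_fun measurableSet_Ico fun s hs => by
      simp only [ψ, concat, if_pos hs.2]
  have hright : ∫⁻ s in Ico α 1, ENNReal.ofReal (Q (ψ s - c))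
      = ENNReal.ofReal (1 - α) * Vc Q φp (Icc ap bp) c := by
    rw [Vc, avg, ← mul_assoc, ← setLIntegral_Ico_comp_affine _ hp hα.2]
    exact setLIntegral_congr_fun measurableSet_Ico fun s hs => by
      simp only [ψ, concat, if_neg (not_lt.2 hs.1)]
  rw [Vc, avg, Real.volume_Icc, sub_zero, ENNReal.ofReal_one, inv_one, one_mul,
    ← setLIntegral_congr Ico_ae_eq_Icc, ← Ico_union_Ico_eq_Ico hα.1 hα.2,
    lintegral_union measurableSet_Ico Ico_disjoint_Ico_same, hleft, hright]

theorem exists_mem_Icc_le_mul_and_sub_le_mul {F : ℝ → ℝ} {d L T : ℝ} (hd0 : 0 ≤ d)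
    (hd : d ≤ 1 - d) (hL : 0 ≤ L) (hF : ContinuousOn F (Icc d (1 - d))) (hFd : 0 ≤ F d)
    (hF1 : F (1 - d) ≤ T) (hT : T ≤ L * (1 - d)) :
    ∃ t ∈ Icc d (1 - d), F t ≤ L * t ∧ T - F t ≤ L * (1 - t) := by
  by_cases hFd' : F d ≤ L * d
  · exact ⟨d, left_mem_Icc.2 hd, hFd', by linarith⟩
  have hzero : (0 : ℝ) ∈ Icc (F (1 - d) - L * (1 - d)) (F d - L * d) :=
    ⟨by linarith, by linarith⟩
  obtain ⟨t, ht, hFt⟩ := intermediate_value_Icc' hd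
    (hF.sub (continuousOn_const.mul continuousOn_id)) hzero
  have hFt : F t = L * t := sub_eq_zero.1 hFt
  exact ⟨t, ht, hFt.le, by nlinarith [mul_nonneg hL hd0]⟩

theorem integrableOn_Icc_of_avg_ne_top {g : ℝ → ℝ} {a b : ℝ} (hg : Measurable g)
    (hg0 : ∀ x, 0 ≤ g x) (hab : a < b) (h : avg (Icc a b) g ≠ ⊤) :
    IntegrableOn g (Icc a b) := by
  refine ⟨hg.aestronglyMeasurable, ?_⟩
  rw [hasFiniteIntegral_iff_ofReal (ae_of_all _ hg0)]
  have hvol : volume (Icc a b) ≠ 0 := by simpa using hab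
  have : ∫⁻ x in Icc a b, ENNReal.ofReal (g x) = volume (Icc a b) * avg (Icc a b) g := by
    rw [avg, ← mul_assoc, ENNReal.mul_inv_cancel hvol measure_Icc_lt_top.ne, one_mul]
  rw [this]
  exact ENNReal.mul_lt_top measure_Icc_lt_top h.lt_top

theorem avg_Icc_le_ofReal_iff {g : ℝ → ℝ} {u v M : ℝ} (huv : u < v)
    (hg : IntegrableOn g (Icc u v)) (hg0 : ∀ x, 0 ≤ g x) (hM : 0 ≤ M) :
    avg (Icc u v) g ≤ ENNReal.ofReal M ↔ ∫ x in u..v, g x ≤ M * (v - u) := by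
  have hlen : 0 < v - u := sub_pos.2 huv
  rw [avg, Real.volume_Icc, intervalIntegral.integral_of_le huv.le,
    ← integral_Icc_eq_integral_Ioc, ← ofReal_integral_eq_lintegral_ofReal hg (ae_of_all _ hg0),
    ← ENNReal.ofReal_inv_of_pos hlen, ← ENNReal.ofReal_mul (inv_nonneg.2 hlen.le),
    ENNReal.ofReal_le_ofReal_iff hM, inv_mul_le_iff₀ hlen, mul_comm]

theorem exists_avg_split_le {g : ℝ → ℝ} {a b d M : ℝ} (hg : Measurable g)
    (hg0 : ∀ x, 0 ≤ g x) (hab : a < b) (hd0 : 0 < d) (hd : d ≤ 1 - d) (hM : 0 ≤ M)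
    (hJ : avg (Icc a b) g ≤ ENNReal.ofReal (M * (1 - d))) :
    ∃ t ∈ Icc d (1 - d), avg (Icc a ((1 - t) * a + t * b)) g ≤ ENNReal.ofReal M ∧
      avg (Icc ((1 - t) * a + t * b) b) g ≤ ENNReal.ofReal M := by
  set m : ℝ → ℝ := fun t => (1 - t) * a + t * b
  have hint : IntegrableOn g (Icc a b) :=
    integrableOn_Icc_of_avg_ne_top hg hg0 hab (ne_top_of_le_ne_top ENNReal.ofReal_ne_top hJ)
  have hint' : IntervalIntegrable g volume a b :=
    (intervalIntegrable_iff_integrableOn_Icc_of_le hab.le).2 hint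
  have hm_mem : ∀ t ∈ Icc d (1 - d), m t ∈ Ioo a b := fun t ht =>
    ⟨by nlinarith [ht.1], by nlinarith [ht.2]⟩
  have hm_uIcc : ∀ t ∈ Icc d (1 - d), m t ∈ uIcc a b := fun t ht => by
    rw [uIcc_of_le hab.le]; exact Ioo_subset_Icc_self (hm_mem t ht)
  have hsplit : ∀ t ∈ Icc d (1 - d),
      (∫ x in a..m t, g x) + ∫ x in m t..b, g x = ∫ x in a..b, g x := fun t ht =>
    intervalIntegral.integral_add_adjacent_intervals
      (hint'.mono_set (uIcc_subset_uIcc left_mem_uIcc (hm_uIcc t ht)))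
      (hint'.mono_set (uIcc_subset_uIcc (hm_uIcc t ht) right_mem_uIcc))
  have hcont : ContinuousOn (fun t => ∫ x in a..m t, g x) (Icc d (1 - d)) :=
    (intervalIntegral.continuousOn_primitive_interval' hint' left_mem_uIcc).comp
      (by fun_prop) hm_uIcc
  have htotal : ∫ x in a..b, g x ≤ M * (b - a) * (1 - d) := by
    have := (avg_Icc_le_ofReal_iff hab hint hg0 (mul_nonneg hM (by linarith))).1 hJ
    linarith
  have hfirst : 0 ≤ ∫ x in a..m d, g x :=
    intervalIntegral.integral_nonneg (hm_mem d (left_mem_Icc.2 hd)).1.le fun x _ => hg0 x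
  have hlast : 0 ≤ ∫ x in m (1 - d)..b, g x :=
    intervalIntegral.integral_nonneg (hm_mem _ (right_mem_Icc.2 hd)).2.le fun x _ => hg0 x
  obtain ⟨t, ht, hleft, hright⟩ := exists_mem_Icc_le_mul_and_sub_le_mul hd0.le hd
    (mul_nonneg hM (sub_pos.2 hab).le) hcont hfirst
    (by linarith [hsplit _ (right_mem_Icc.2 hd)]) htotal
  obtain ⟨hat, htb⟩ := hm_mem t ht
  refine ⟨t, ht, ?_, ?_⟩
  · rw [avg_Icc_le_ofReal_iff hat (hint.mono_set (Icc_subset_Icc_right htb.le)) hg0 hM]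
    linarith
  · rw [avg_Icc_le_ofReal_iff htb (hint.mono_set (Icc_subset_Icc_left hat.le)) hg0 hM]
    linarith [hsplit t ht]

theorem V_concat_le {Q φm φp : ℝ → ℝ} {am bm ap bp α c : ℝ} {r : ℝ≥0∞} (hm : am < bm)
    (hp : ap < bp) (hα : α ∈ Icc (0 : ℝ) 1) (hVm : Vc Q φm (Icc am bm) c ≤ r)
    (hVp : Vc Q φp (Icc ap bp) c ≤ r) :
    V Q (concat φm φp am bm ap bp α) (Icc 0 1) ≤ r :=
  calc V Q (concat φm φp am bm ap bp α) (Icc 0 1)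
      ≤ Vc Q (concat φm φp am bm ap bp α) (Icc 0 1) c := iInf_le _ c
    _ = ENNReal.ofReal α * Vc Q φm (Icc am bm) c
        + ENNReal.ofReal (1 - α) * Vc Q φp (Icc ap bp) c := Vc_concat Q φm φp hm hp hα c
    _ ≤ ENNReal.ofReal α * r + ENNReal.ofReal (1 - α) * r := by gcongr
    _ = r := by
      rw [← add_mul, ← ENNReal.ofReal_add hα.1 (sub_nonneg.2 hα.2), add_sub_cancel,
        ENNReal.ofReal_one, one_mul]

theorem stmt5 (Q : ℝ → ℝ) (hQ : StrictConvexOn ℝ univ Q) (hQe : ∀ t, Q (-t) = Q t)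
    (hQ0 : ∀ t, 0 ≤ Q t) (ε' ε δ : ℝ) (h1 : 0 < ε') (h2 : ε' < ε)
    (hδ0 : 0 < δ) (hδ : δ < min (1/2) (1 - Q ε' / Q ε))
    (φ : ℝ → ℝ) (hφ : Measurable φ) (a b : ℝ) (hab : a < b)
    (hW : W Q φ (Icc a b) ≤ ENNReal.ofReal (Q ε')) :
    ∃ t ∈ Ioo δ (1 - δ), ∀ α ∈ Icc (0:ℝ) 1,
      V Q (concat φ φ a ((1 - t)*a + t*b) ((1 - t)*a + t*b) b α) (Icc (0:ℝ) 1)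
        ≤ ENNReal.ofReal (Q ε) := by
  have hQε : Q ε' < Q ε := hQ.lt_of_abs_lt_of_even hQe (by rwa [abs_of_pos h1])
  have hQε0 : 0 < Q ε := (hQ0 ε').trans_lt hQε
  obtain ⟨d, hδd, hd⟩ := exists_between hδ
  obtain ⟨hd_half, hd_ratio⟩ := lt_min_iff.1 hd
  have hd0 : 0 < d := hδ0.trans hδd
  have hK : Q ε' < Q ε * (1 - d) := by
    rw [mul_comm, ← div_lt_iff₀ hQε0]; linarith
  have hVK : V Q φ (Icc a b) < ENNReal.ofReal (Q ε * (1 - d)) :=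
    ((V_le_W Q φ subset_rfl).trans hW).trans_lt
      ((ENNReal.ofReal_lt_ofReal_iff_of_nonneg (hQ0 ε')).2 hK)
  obtain ⟨c, hc⟩ := iInf_lt_iff.1 hVK
  have hQc : Continuous Q := continuousOn_univ.1 (hQ.convexOn.continuousOn isOpen_univ)
  obtain ⟨t, ht, hleft, hright⟩ := exists_avg_split_le (hQc.measurable.comp (hφ.sub_const c))
    (fun x => hQ0 (φ x - c)) hab hd0 (by linarith) hQε0.le hc.le
  refine ⟨t, ⟨hδd.trans_le ht.1, by linarith [ht.2]⟩, fun α hα => ?_⟩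
  exact V_concat_le (by nlinarith [ht.1]) (by nlinarith [ht.2]) hα hleft hright
end
end

section
/- Let Q : ℝ → [0,∞) be strictly convex and even and φ a bounded measurable function on [0,1]. Then for almost every s ∈ [0,1] and every sequence of subintervals J_n ∋ s with |J_n| → 0, one has ⟨Q(φ−c)⟩_{J_n} → Q(φ(s)−c) for every c ∈ ℝ, and the minimizers 𝒞(φ,J_n) of c ↦ ⟨Q(φ−c)⟩_{J_n} converge to φ(s). -/
open MeasureTheory Set Filter Topology
open scoped ENNReal

noncomputable section

/-! At a Lebesgue point `s` of `φ` the averages `⨍_{J_n} |φ - φ s|` tend to zero, and since `Q` is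
Lipschitz on bounded sets this forces `⨍_{J_n} Q (φ - c) → Q (φ s - c)` for every `c`.
The functions `c ↦ ⨍_{J_n} Q (φ - c)` are convex and converge pointwise to `c ↦ Q (φ s - c)`,
which has a strict minimum at `φ s`. For convex functions on `ℝ` this pins down the minimizers:
once the values at `φ s ± ε` exceed the value at `φ s`, every minimizer lies within `ε` of `φ s`. -/

open scoped NNReal

section EvenConvex

variable {Q : ℝ → ℝ}

lemma ConvexOn.apply_le_apply_of_abs_le (hQ : ConvexOn ℝ univ Q) (hQe : Q.Even) {u v : ℝ}
    (h : |u| ≤ |v|) : Q u ≤ Q v := by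
  have hQv : Q |v| = Q v := by rcases abs_choice v with hv | hv <;> simp [hv, hQe v]
  have hu : u ∈ segment ℝ (-|v|) |v| := by
    rw [segment_eq_Icc (by linarith [abs_nonneg v])]
    exact abs_le.mp h
  simpa [hQe |v|, hQv] using hQ.le_on_segment (mem_univ _) (mem_univ _) hu

lemma StrictConvexOn.apply_zero_lt_of_even (hQ : StrictConvexOn ℝ univ Q) (hQe : Q.Even)
    {t : ℝ} (ht : t ≠ 0) : Q 0 < Q t := by
  have := hQ.2 (mem_univ t) (mem_univ (-t)) (by contrapose! ht; linarith) one_half_pos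
    one_half_pos (add_halves 1)
  simp only [smul_eq_mul, hQe t] at this
  rwa [show (1 / 2 : ℝ) * t + 1 / 2 * -t = 0 by ring, ← add_mul, add_halves, one_mul] at this

end EvenConvex

lemma abs_sub_max_min_le {x c M : ℝ} (hx : |x| ≤ M) : |x - max (-M) (min c M)| ≤ |x - c| := by
  rw [abs_le] at hx
  rcases le_total c M with hcM | hcM
  · rw [min_eq_left hcM]
    rcases le_total (-M) c with hMc | hMc
    · rw [max_eq_right hMc]
    · rw [max_eq_left hMc]
      exact abs_le_abs_of_nonneg (by linarith) (by linarith)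
  · rw [min_eq_right hcM, max_eq_right (by linarith)]
    exact abs_le_abs_of_nonpos (by linarith) (by linarith)

lemma ConvexOn.abs_sub_lt_of_isMinOn {g : ℝ → ℝ} (hg : ConvexOn ℝ univ g) {m x₀ ε : ℝ}
    (hm : IsMinOn g univ m) (hε : 0 < ε) (hright : g x₀ < g (x₀ + ε))
    (hleft : g x₀ < g (x₀ - ε)) : |m - x₀| < ε := by
  by_contra! h
  have hmx₀ : g m ≤ g x₀ := hm (mem_univ x₀)
  rcases le_abs'.mp h with hm' | hm'
  · have hmem : x₀ - ε ∈ segment ℝ m x₀ := by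
      rw [segment_eq_Icc (by linarith)]; constructor <;> linarith
    have := hg.le_on_segment (mem_univ _) (mem_univ _) hmem
    rw [max_eq_right hmx₀] at this
    linarith
  · have hmem : x₀ + ε ∈ segment ℝ x₀ m := by
      rw [segment_eq_Icc (by linarith)]; constructor <;> linarith
    have := hg.le_on_segment (mem_univ _) (mem_univ _) hmem
    rw [max_eq_left hmx₀] at this
    linarith

lemma tendsto_of_isMinOn_of_convexOn {ι : Type*} {l : Filter ι} {f : ι → ℝ → ℝ} {F : ℝ → ℝ}
    {m : ι → ℝ} {x₀ : ℝ} (hf : ∀ i, ConvexOn ℝ univ (f i)) (hm : ∀ i, IsMinOn (f i) univ (m i))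
    (hF : ∀ x, Tendsto (fun i => f i x) l (𝓝 (F x))) (hx₀ : ∀ x ≠ x₀, F x₀ < F x) :
    Tendsto m l (𝓝 x₀) := by
  rw [Metric.tendsto_nhds]
  intro ε hε
  filter_upwards [(hF x₀).eventually_lt (hF (x₀ + ε)) (hx₀ _ (by linarith)),
    (hF x₀).eventually_lt (hF (x₀ - ε)) (hx₀ _ (by linarith))] with i hright hleft
  exact (hf i).abs_sub_lt_of_isMinOn (hm i) hε hright hleft

section SetAverage

variable {α : Type*} [MeasurableSpace α] {μ : Measure α} {J : Set α}

lemma abs_setAverage_sub_setAverage_le (hJ : MeasurableSet J) {f g h : α → ℝ}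
    (hf : IntegrableOn f J μ) (hg : IntegrableOn g J μ) (hh : IntegrableOn h J μ)
    (hfg : ∀ y ∈ J, |f y - g y| ≤ h y) :
    |⨍ y in J, f y ∂μ - ⨍ y in J, g y ∂μ| ≤ ⨍ y in J, h y ∂μ := by
  simp only [setAverage_eq, smul_eq_mul]
  rw [← mul_sub, abs_mul, abs_of_nonneg (by positivity), ← integral_sub hf hg]
  gcongr
  calc |∫ y in J, f y - g y ∂μ| ≤ ∫ y in J, |f y - g y| ∂μ := abs_integral_le_integral_abs
    _ ≤ ∫ y in J, h y ∂μ := setIntegral_mono_on (hf.sub hg).abs hh hJ hfg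

lemma setAverage_le_setAverage (hJ : MeasurableSet J) {f g : α → ℝ}
    (hf : IntegrableOn f J μ) (hg : IntegrableOn g J μ) (hfg : ∀ y ∈ J, f y ≤ g y) :
    ⨍ y in J, f y ∂μ ≤ ⨍ y in J, g y ∂μ := by
  simp only [setAverage_eq, smul_eq_mul]
  exact mul_le_mul_of_nonneg_left (setIntegral_mono_on hf hg hJ hfg) (by positivity)

lemma setAverage_nonneg {f : α → ℝ} (hf : ∀ y, 0 ≤ f y) : 0 ≤ ⨍ y in J, f y ∂μ := by
  simp only [setAverage_eq, smul_eq_mul]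
  exact mul_nonneg (by positivity) (integral_nonneg hf)

end SetAverage

section ShiftedAverage

variable {α : Type*} [MeasurableSpace α] {μ : Measure α} {J : Set α} {Q : ℝ → ℝ} {φ : α → ℝ}
  {M : ℝ}

lemma integrableOn_comp_sub_of_abs_le (hQ : Continuous Q) (hφ : Measurable φ)
    (hJ : MeasurableSet J) (hJT : μ J ≠ ∞) (hφJ : ∀ y ∈ J, |φ y| ≤ M) (c : ℝ) :
    IntegrableOn (fun y => Q (φ y - c)) J μ := by
  obtain ⟨C, hC⟩ := (isCompact_Icc (a := -(M + |c|)) (b := M + |c|)).exists_bound_of_continuousOn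
    hQ.continuousOn
  refine Measure.integrableOn_of_bounded hJT
    (hQ.measurable.comp (hφ.sub_const c)).aestronglyMeasurable
    (ae_restrict_of_forall_mem hJ fun y hy => hC _ (abs_le.mp ?_))
  exact (abs_sub _ _).trans (by linarith [hφJ y hy])

lemma ConvexOn.setAverage_comp_sub (hQ : ConvexOn ℝ univ Q)
    (hint : ∀ c, IntegrableOn (fun y => Q (φ y - c)) J μ) :
    ConvexOn ℝ univ fun c => ⨍ y in J, Q (φ y - c) ∂μ := by
  simp only [setAverage_eq]
  refine ConvexOn.smul (by positivity) ⟨convex_univ, fun x _ x' _ a b ha hb hab => ?_⟩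
  calc ∫ y in J, Q (φ y - (a • x + b • x')) ∂μ
      ≤ ∫ y in J, a * Q (φ y - x) + b * Q (φ y - x') ∂μ := by
        refine integral_mono (hint _) (((hint x).const_mul a).add ((hint x').const_mul b))
          fun y => ?_
        have := hQ.2 (mem_univ (φ y - x)) (mem_univ (φ y - x')) ha hb hab
        simp only [smul_eq_mul] at this ⊢
        convert this using 2
        linear_combination φ y * hab.symm
    _ = a • ∫ y in J, Q (φ y - x) ∂μ + b • ∫ y in J, Q (φ y - x') ∂μ := by
        rw [integral_add ((hint x).const_mul a) ((hint x').const_mul b), integral_const_mul,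
          integral_const_mul, smul_eq_mul, smul_eq_mul]

lemma exists_isMinOn_setAverage_comp_sub (hQ : ConvexOn ℝ univ Q) (hQe : Q.Even)
    (hJ : MeasurableSet J) (hint : ∀ c, IntegrableOn (fun y => Q (φ y - c)) J μ) (hM : 0 ≤ M)
    (hφJ : ∀ y ∈ J, |φ y| ≤ M) :
    ∃ c₀, IsMinOn (fun c => ⨍ y in J, Q (φ y - c) ∂μ) univ c₀ := by
  obtain ⟨c₀, -, hc₀⟩ := isCompact_Icc.exists_isMinOn (nonempty_Icc.mpr (neg_le_self hM))
    (((hQ.setAverage_comp_sub hint).continuousOn isOpen_univ).mono (subset_univ _))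
  refine ⟨c₀, fun c _ => ?_⟩
  -- clamping `c` to `[-M, M]` brings it closer to every value of `φ` on `J`
  have hclamp : max (-M) (min c M) ∈ Icc (-M) M :=
    ⟨le_max_left _ _, max_le (by linarith) (min_le_right _ _)⟩
  refine (hc₀ hclamp).trans (setAverage_le_setAverage hJ (hint _) (hint _) fun y hy => ?_)
  exact hQ.apply_le_apply_of_abs_le hQe (abs_sub_max_min_le (hφJ y hy))

lemma abs_setAverage_comp_sub_le_of_lipschitzOnWith {K : ℝ≥0} {S : Set ℝ} {x : ℝ}
    (hQ : LipschitzOnWith K Q S) (hJ : MeasurableSet J) (hJ0 : μ J ≠ 0) (hJT : μ J ≠ ∞)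
    (hφS : ∀ y ∈ J, φ y ∈ S) (hx : x ∈ S) (hQφ : IntegrableOn (fun y => Q (φ y)) J μ)
    (hφx : IntegrableOn (fun y => |φ y - x|) J μ) :
    |⨍ y in J, Q (φ y) ∂μ - Q x| ≤ K * ⨍ y in J, |φ y - x| ∂μ := by
  calc |⨍ y in J, Q (φ y) ∂μ - Q x| = |⨍ y in J, Q (φ y) ∂μ - ⨍ _ in J, Q x ∂μ| := by
        rw [setAverage_const hJ0 hJT]
    _ ≤ ⨍ y in J, K * |φ y - x| ∂μ :=
        abs_setAverage_sub_setAverage_le hJ hQφ (integrableOn_const hJT) (hφx.const_mul _)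
          fun y hy => by simpa [Real.dist_eq] using hQ.dist_le_mul _ (hφS y hy) _ hx
    _ = K * ⨍ y in J, |φ y - x| ∂μ := by
        simp only [setAverage_eq, smul_eq_mul, integral_const_mul]
        ring

lemma tendsto_setAverage_comp_sub {ι : Type*} {l : Filter ι} {J : ι → Set α} {s : α}
    (hQ : ConvexOn ℝ univ Q) (hφ : Measurable φ) (hJ : ∀ i, MeasurableSet (J i))
    (hJ0 : ∀ i, μ (J i) ≠ 0) (hJT : ∀ i, μ (J i) ≠ ∞) (hφJ : ∀ i, ∀ y ∈ J i, |φ y| ≤ M)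
    (hs : |φ s| ≤ M) (hlim : Tendsto (fun i => ⨍ y in J i, |φ y - φ s| ∂μ) l (𝓝 0)) (c : ℝ) :
    Tendsto (fun i => ⨍ y in J i, Q (φ y - c) ∂μ) l (𝓝 (Q (φ s - c))) := by
  obtain ⟨K, hK⟩ := hQ.locallyLipschitz.locallyLipschitzOn.exists_lipschitzOnWith_of_compact
    (isCompact_Icc (a := -(M + |c|)) (b := M + |c|))
  have hmem : ∀ {t}, |t| ≤ M → t - c ∈ Icc (-(M + |c|)) (M + |c|) := fun ht =>
    abs_le.mp ((abs_sub _ _).trans (by linarith))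
  rw [← tendsto_sub_nhds_zero_iff]
  refine squeeze_zero_norm (fun i => ?_) (by simpa using hlim.const_mul (K : ℝ))
  simpa only [Real.norm_eq_abs, sub_sub_sub_cancel_right] using
    abs_setAverage_comp_sub_le_of_lipschitzOnWith hK (hJ i) (hJ0 i) (hJT i)
      (fun y hy => hmem (hφJ i y hy)) (hmem hs)
      (integrableOn_comp_sub_of_abs_le hQ.locallyLipschitz.continuous hφ (hJ i) (hJT i) (hφJ i) c)
      (by simpa only [sub_sub_sub_cancel_right] using
        integrableOn_comp_sub_of_abs_le continuous_abs hφ (hJ i) (hJT i) (hφJ i) (φ s))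

end ShiftedAverage

lemma ae_tendsto_setAverage_abs_sub_Icc {f : ℝ → ℝ} {S : Set ℝ} (hS : MeasurableSet S)
    (hf : IntegrableOn f S) :
    ∀ᵐ s ∂volume.restrict S, ∀ {ι : Type*} {l : Filter ι} (a b : ι → ℝ), (∀ i, a i < b i) →
      (∀ i, Icc (a i) (b i) ⊆ S) → (∀ i, s ∈ Icc (a i) (b i)) →
      Tendsto (fun i => b i - a i) l (𝓝 0) →
      Tendsto (fun i => ⨍ y in Icc (a i) (b i), |f y - f s|) l (𝓝 0) := by
  have hloc : LocallyIntegrable (S.indicator f) :=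
    ((integrable_indicator_iff hS).mpr hf).locallyIntegrable
  filter_upwards
    [ae_restrict_of_ae (IsUnifLocDoublingMeasure.ae_tendsto_average_norm_sub (μ := volume) hloc 1),
    ae_restrict_mem hS] with s hs hsS ι l a b hab hsub hmem hlen
  have hball : ∀ i, Metric.closedBall ((a i + b i) / 2) ((b i - a i) / 2) = Icc (a i) (b i) :=
    fun i => by rw [Real.closedBall_eq_Icc]; congr 1 <;> ring
  have hδ : Tendsto (fun i => (b i - a i) / 2) l (𝓝[>] 0) :=
    tendsto_nhdsWithin_iff.mpr
      ⟨by simpa using hlen.div_const 2,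
        Eventually.of_forall fun i => half_pos (sub_pos.mpr (hab i))⟩
  refine (hs (fun i => (a i + b i) / 2) _ hδ (Eventually.of_forall fun i => ?_)).congr fun i => ?_
  · rw [one_mul, hball]
    exact hmem i
  · rw [hball]
    refine setAverage_congr_fun measurableSet_Icc (ae_of_all _ fun y hy => ?_)
    simp [indicator_of_mem (hsub i hy), indicator_of_mem hsS, Real.norm_eq_abs]

section Minimizer

variable {Q φ : ℝ → ℝ} {J : Set ℝ}

lemma Vc_eq_ofReal_setAverage (hQ0 : ∀ t, 0 ≤ Q t) {c : ℝ}
    (hint : IntegrableOn (fun y => Q (φ y - c)) J) :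
    Vc Q φ J c = ENNReal.ofReal (⨍ y in J, Q (φ y - c)) := by
  rw [Vc, avg, ofReal_setAverage hint (ae_of_all _ fun _ => hQ0 _), ENNReal.div_eq_inv_mul]

lemma isMinOn_setAverage_CC (hQ0 : ∀ t, 0 ≤ Q t)
    (hint : ∀ c, IntegrableOn (fun y => Q (φ y - c)) J)
    (hmin : ∃ c₀, IsMinOn (fun c => ⨍ y in J, Q (φ y - c)) univ c₀) :
    IsMinOn (fun c => ⨍ y in J, Q (φ y - c)) univ (CC Q φ J) := by
  have hV := fun c => Vc_eq_ofReal_setAverage hQ0 (hint c)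
  obtain ⟨c₀, hc₀⟩ := hmin
  have hCC : ∀ c', Vc Q φ J (CC Q φ J) ≤ Vc Q φ J c' :=
    Classical.epsilon_spec (p := fun c => ∀ c', Vc Q φ J c ≤ Vc Q φ J c')
      ⟨c₀, fun c' => by simpa only [hV] using ENNReal.ofReal_le_ofReal (hc₀ (mem_univ c'))⟩
  rw [isMinOn_iff]
  intro c _
  simpa only [hV, ENNReal.ofReal_le_ofReal_iff (setAverage_nonneg fun y => hQ0 _)]
    using hCC c

end Minimizer

theorem stmt7 (Q : ℝ → ℝ) (hQ : StrictConvexOn ℝ univ Q) (hQe : ∀ t, Q (-t) = Q t)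
    (hQ0 : ∀ t, 0 ≤ Q t) (φ : ℝ → ℝ) (hφ : Measurable φ)
    (M : ℝ) (hM : ∀ x ∈ Icc (0:ℝ) 1, |φ x| ≤ M) :
    ∀ᵐ s ∂(volume.restrict (Icc (0:ℝ) 1)), ∀ a b : ℕ → ℝ,
      (∀ n, a n < b n) → (∀ n, Icc (a n) (b n) ⊆ Icc (0:ℝ) 1) →
      (∀ n, s ∈ Icc (a n) (b n)) → Tendsto (fun n => b n - a n) atTop (nhds 0) →
      (∀ c : ℝ, Tendsto (fun n => Vc Q φ (Icc (a n) (b n)) c) atTop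
          (nhds (ENNReal.ofReal (Q (φ s - c)))))
      ∧ Tendsto (fun n => CC Q φ (Icc (a n) (b n))) atTop (nhds (φ s)) := by
  have hM0 : 0 ≤ M := (abs_nonneg _).trans (hM 0 ⟨le_rfl, zero_le_one⟩)
  have hQc : Continuous Q := hQ.convexOn.locallyLipschitz.continuous
  have hφint : IntegrableOn φ (Icc 0 1) := by
    simpa using integrableOn_comp_sub_of_abs_le continuous_id hφ measurableSet_Icc (by simp) hM 0
  filter_upwards [ae_tendsto_setAverage_abs_sub_Icc measurableSet_Icc hφint,
    ae_restrict_mem measurableSet_Icc] with s hs hs01 a b hab hsub hmem hlen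
  have hJ0 : ∀ n, volume (Icc (a n) (b n)) ≠ 0 := fun n => by simp [hab n]
  have hφJ : ∀ n, ∀ y ∈ Icc (a n) (b n), |φ y| ≤ M := fun n y hy => hM y (hsub n hy)
  have hint : ∀ n c, IntegrableOn (fun y => Q (φ y - c)) (Icc (a n) (b n)) := fun n =>
    integrableOn_comp_sub_of_abs_le hQc hφ measurableSet_Icc (by simp) (hφJ n)
  have hlim : ∀ c, Tendsto (fun n => ⨍ y in Icc (a n) (b n), Q (φ y - c)) atTop
      (𝓝 (Q (φ s - c))) :=
    tendsto_setAverage_comp_sub hQ.convexOn hφ (fun _ => measurableSet_Icc) hJ0 (fun _ => by simp)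
      hφJ (hM s hs01) (hs a b hab hsub hmem hlen)
  refine ⟨fun c => ?_, ?_⟩
  · simpa only [Vc_eq_ofReal_setAverage hQ0 (hint _ c), Function.comp_def] using
      (ENNReal.continuous_ofReal.tendsto _).comp (hlim c)
  · refine tendsto_of_isMinOn_of_convexOn (fun n => hQ.convexOn.setAverage_comp_sub (hint n))
      (fun n => isMinOn_setAverage_CC hQ0 (hint n) (exists_isMinOn_setAverage_comp_sub
        hQ.convexOn hQe measurableSet_Icc (hint n) hM0 (hφJ n))) hlim fun x hx => ?_
    rw [sub_self]
    exact hQ.apply_zero_lt_of_even hQe (sub_ne_zero.mpr hx.symm)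
end
end

section
/- Let (F_n) be a sequence of convex functions ℝ → ℝ converging pointwise on ℚ to a strictly convex function F : ℝ → ℝ with F(c) → ∞ as |c| → ∞. Then F_n → F pointwise on ℝ, uniformly on compact sets, and if each F_n and F have unique minimizers c_n and c respectively, then c_n → c. -/
open MeasureTheory Set Filter Topology
open scoped ENNReal

noncomputable section

lemma slope4 {g : ℝ → ℝ} (hg : ConvexOn ℝ univ g) {p q r s : ℝ}
    (h1 : p < q) (h2 : q ≤ r) (h3 : r < s) :
    (g q - g p) / (q - p) ≤ (g s - g r) / (s - r) := by
  rcases eq_or_lt_of_le h2 with rfl | h2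
  · exact hg.slope_mono_adjacent (mem_univ _) (mem_univ _) h1 h3
  · calc (g q - g p) / (q - p) ≤ (g r - g q) / (r - q) :=
        hg.slope_mono_adjacent (mem_univ _) (mem_univ _) h1 h2
      _ ≤ (g s - g r) / (s - r) :=
        hg.slope_mono_adjacent (mem_univ _) (mem_univ _) h2 h3

lemma convex_lip {g : ℝ → ℝ} (hg : ConvexOn ℝ univ g) {a' a b b' x y M : ℝ}
    (ha : a' < a) (hb : b < b') (hax : a ≤ x) (hxy : x ≤ y) (hyb : y ≤ b)
    (hM : max |(g a - g a') / (a - a')| |(g b' - g b) / (b' - b)| ≤ M) :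
    |g y - g x| ≤ M * (y - x) := by
  rcases eq_or_lt_of_le hxy with rfl | hxy
  · simp
  have h1 : (g a - g a') / (a - a') ≤ (g y - g x) / (y - x) :=
    slope4 hg ha hax hxy
  have h2 : (g y - g x) / (y - x) ≤ (g b' - g b) / (b' - b) :=
    slope4 hg hxy hyb hb
  have hyx : 0 < y - x := sub_pos.2 hxy
  have habs : |(g y - g x) / (y - x)| ≤ M := by
    rw [abs_le]
    constructor
    · have := neg_abs_le ((g a - g a') / (a - a'))
      have h3 := le_trans (le_max_left _ |(g b' - g b) / (b' - b)|) hM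
      linarith
    · have := le_abs_self ((g b' - g b) / (b' - b))
      have h3 := le_trans (le_max_right |(g a - g a') / (a - a')| _) hM
      linarith
  calc |g y - g x| = |(g y - g x) / (y - x)| * (y - x) := by
        rw [abs_div, abs_of_pos hyx, div_mul_cancel₀]
        exact ne_of_gt hyx
    _ ≤ M * (y - x) := by
        apply mul_le_mul_of_nonneg_right habs (le_of_lt hyx)

lemma convex_lip_abs {g : ℝ → ℝ} (hg : ConvexOn ℝ univ g) {a b x y M : ℝ}
    (hx : x ∈ Icc a b) (hy : y ∈ Icc a b)
    (hM : max |(g a - g (a-1)) / (a - (a-1))| |(g (b+1) - g b) / ((b+1) - b)| ≤ M) :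
    |g y - g x| ≤ M * |y - x| := by
  rcases le_total x y with h | h
  · have h2 : |y - x| = y - x := abs_of_nonneg (by linarith)
    rw [h2]
    exact convex_lip hg (by linarith) (by linarith) hx.1 h hy.2 hM
  · have h1 : |g y - g x| = |g x - g y| := abs_sub_comm _ _
    have h2 : |y - x| = x - y := by rw [abs_sub_comm]; exact abs_of_nonneg (by linarith)
    rw [h1, h2]
    exact convex_lip hg (by linarith) (by linarith) hy.1 h hx.2 hM

set_option maxHeartbeats 1000000 in
lemma ptwise (Fn : ℕ → ℝ → ℝ) (F : ℝ → ℝ)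
    (hFn : ∀ n, ConvexOn ℝ univ (Fn n)) (hFc : ConvexOn ℝ univ F)
    (hconv : ∀ q : ℚ, Tendsto (fun n => Fn n (q : ℝ)) atTop (nhds (F (q : ℝ))))
    (x : ℝ) : Tendsto (fun n => Fn n x) atTop (nhds (F x)) := by
  have Fcont : Continuous F := hFc.locallyLipschitz.continuous
  rw [Metric.tendsto_nhds]
  intro ε hε
  obtain ⟨δ, hδ, hδF⟩ := Metric.continuousAt_iff.1 Fcont.continuousAt (ε/4) (by positivity)
  have hFnear : ∀ y : ℝ, |y - x| < δ → |F y - F x| < ε/4 := by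
    intro y hy
    have := hδF (show dist y x < δ by rwa [Real.dist_eq])
    rwa [Real.dist_eq] at this
  -- upper bound
  obtain ⟨q, hq1, hq2⟩ := exists_rat_btwn (show x - δ < x by linarith)
  obtain ⟨r, hr1, hr2⟩ := exists_rat_btwn (show x < x + δ by linarith)
  have hqr : (q:ℝ) < r := lt_trans hq2 hr1
  have hqrpos : (0:ℝ) < r - q := by linarith
  set t : ℝ := ((r:ℝ) - x) / ((r:ℝ) - q) with ht
  have ht0 : 0 ≤ t := div_nonneg (by linarith) (by linarith)
  have ht1 : t ≤ 1 := by
    rw [div_le_one hqrpos]; linarith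
  have hcombo : t * (q:ℝ) + (1 - t) * (r:ℝ) = x := by
    have hmul : t * ((r:ℝ) - q) = (r:ℝ) - x := div_mul_cancel₀ _ (ne_of_gt hqrpos)
    linear_combination -hmul
  have key : ∀ n, Fn n x ≤ t * Fn n q + (1 - t) * Fn n r := by
    intro n
    have h := (hFn n).2 (mem_univ ((q:ℝ))) (mem_univ ((r:ℝ))) ht0
      (by linarith : (0:ℝ) ≤ 1 - t) (by ring : t + (1 - t) = 1)
    simp only [smul_eq_mul] at h
    rw [hcombo] at h
    exact h
  have hlim : Tendsto (fun n => t * Fn n q + (1 - t) * Fn n r) atTop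
      (nhds (t * F q + (1 - t) * F r)) :=
    ((hconv q).const_mul t).add ((hconv r).const_mul (1 - t))
  have hFq : |F q - F x| < ε/4 := hFnear _ (by rw [abs_lt]; constructor <;> linarith)
  have hFr : |F r - F x| < ε/4 := hFnear _ (by rw [abs_lt]; constructor <;> linarith)
  have htarget : t * F q + (1 - t) * F r < F x + ε/2 := by
    have h1 := abs_lt.1 hFq
    have h2 := abs_lt.1 hFr
    nlinarith [h1.2, h2.2, ht0, ht1]
  have upper : ∀ᶠ n in atTop, Fn n x < F x + ε/2 :=
    (hlim.eventually_lt_const htarget).mono fun n hn => lt_of_le_of_lt (key n) hn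
  -- lower bound
  obtain ⟨p, hp1, hp2⟩ := exists_rat_btwn (show x - 2 < x - 1 by linarith)
  obtain ⟨q0, hq01, hq02⟩ := exists_rat_btwn (show max (p:ℝ) (x - δ) < x by
    apply max_lt (by linarith) (by linarith))
  obtain ⟨r', hr'1, hr'2⟩ := exists_rat_btwn (show x < x + 1 by linarith)
  have hpq0 : (p:ℝ) < q0 := lt_of_le_of_lt (le_max_left _ _) hq01
  set C : ℝ := max |(F q0 - F p) / ((q0:ℝ) - p)| |(F r' - F x) / ((r':ℝ) - x)| with hC
  have hC0 : 0 ≤ C := le_trans (abs_nonneg _) (le_max_left _ _)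
  obtain ⟨q, hqa, hqb⟩ := exists_rat_btwn
    (show max (q0:ℝ) (x - min δ (ε / (4 * (C + 1)))) < x by
      apply max_lt hq02
      have : 0 < min δ (ε / (4 * (C + 1))) := lt_min hδ (by positivity)
      linarith)
  have hq0q : (q0:ℝ) < q := lt_of_le_of_lt (le_max_left _ _) hqa
  have hpq : (p:ℝ) < q := lt_trans hpq0 hq0q
  have hqx : (q:ℝ) < x := hqb
  have hxq_small : x - (q:ℝ) < min δ (ε / (4 * (C + 1))) := by
    have := lt_of_le_of_lt (le_max_right (q0:ℝ) _) hqa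
    linarith
  -- slope bound
  have hslope_ub : (F q - F p) / ((q:ℝ) - p) ≤ (F r' - F x) / ((r':ℝ) - x) :=
    slope4 hFc hpq (le_of_lt hqx) hr'1
  have hslope_lb : (F q0 - F p) / ((q0:ℝ) - p) ≤ (F q - F p) / ((q:ℝ) - p) := by
    have := hFc.secant_mono (mem_univ ((p:ℝ))) (mem_univ ((q0:ℝ))) (mem_univ ((q:ℝ)))
      (ne_of_gt hpq0) (ne_of_gt hpq) (le_of_lt hq0q)
    convert this using 2 <;> ring
  have hslope_abs : |(F q - F p) / ((q:ℝ) - p)| ≤ C := by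
    rw [abs_le]
    constructor
    · have h1 : -C ≤ -|(F q0 - F p) / ((q0:ℝ) - p)| := neg_le_neg (le_max_left _ _)
      have h2 := neg_abs_le ((F q0 - F p) / ((q0:ℝ) - p))
      linarith
    · have h1 : |(F r' - F x) / ((r':ℝ) - x)| ≤ C := le_max_right _ _
      have h2 := le_abs_self ((F r' - F x) / ((r':ℝ) - x))
      linarith
  have key2 : ∀ n, Fn n q + (x - q) * ((Fn n q - Fn n p) / ((q:ℝ) - p)) ≤ Fn n x := by
    intro n
    have h := (hFn n).slope_mono_adjacent (mem_univ ((p:ℝ))) (mem_univ x) hpq hqx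
    have hxq : (0:ℝ) < x - q := by linarith
    have h2 := mul_le_mul_of_nonneg_left h (le_of_lt hxq)
    rw [mul_div_cancel₀ _ (ne_of_gt hxq)] at h2
    linarith
  have hlim2 : Tendsto (fun n => Fn n q + (x - q) * ((Fn n q - Fn n p) / ((q:ℝ) - p)))
      atTop (nhds (F q + (x - q) * ((F q - F p) / ((q:ℝ) - p)))) :=
    (hconv q).add ((((hconv q).sub (hconv p)).div_const _).const_mul (x - q))
  have htarget2 : F x - ε/2 < F q + (x - q) * ((F q - F p) / ((q:ℝ) - p)) := by
    have hFq2 : |F q - F x| < ε/4 := hFnear _ (by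
      rw [abs_lt]
      have := lt_of_lt_of_le hxq_small (min_le_left _ _)
      constructor <;> linarith)
    have hsmall : x - (q:ℝ) < ε / (4 * (C + 1)) :=
      lt_of_lt_of_le hxq_small (min_le_right _ _)
    have hxq : (0:ℝ) ≤ x - q := by linarith
    have hterm : -(ε/4) < (x - q) * ((F q - F p) / ((q:ℝ) - p)) := by
      have h1 : -C ≤ (F q - F p) / ((q:ℝ) - p) := (abs_le.1 hslope_abs).1
      have h2 : (x - q) * (-C) ≤ (x - q) * ((F q - F p) / ((q:ℝ) - p)) :=
        mul_le_mul_of_nonneg_left h1 hxq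
      have h3 : (x - q) * C ≤ (ε / (4 * (C + 1))) * C :=
        mul_le_mul_of_nonneg_right (le_of_lt hsmall) hC0
      have h4 : (ε / (4 * (C + 1))) * C < ε/4 := by
        rw [div_mul_eq_mul_div, div_lt_div_iff₀ (by positivity) (by norm_num)]
        nlinarith [hε, hC0]
      have h5 : (x - q) * (-C) = -((x - q) * C) := by ring
      linarith
    have := (abs_lt.1 hFq2).1
    linarith
  have lower : ∀ᶠ n in atTop, F x - ε/2 < Fn n x :=
    (hlim2.eventually_const_lt htarget2).mono fun n hn => lt_of_lt_of_le hn (key2 n)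
  filter_upwards [upper, lower] with n h1 h2
  rw [Real.dist_eq, abs_lt]
  constructor <;> linarith

lemma exists_node {a b x : ℝ} {N : ℕ} (hN : 0 < N) (hx : x ∈ Icc a b) :
    ∃ i : ℕ, i ≤ N ∧ |x - (a + i * ((b - a) / N))| ≤ (b - a) / N := by
  set h : ℝ := (b - a) / N with hh
  have hab : a ≤ b := le_trans hx.1 hx.2
  have hNpos : (0:ℝ) < N := Nat.cast_pos.2 hN
  have h0 : 0 ≤ h := div_nonneg (by linarith) (le_of_lt hNpos)
  rcases eq_or_lt_of_le h0 with heq | hpos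
  · -- h = 0, so a = b and x = a
    have hba : b - a = 0 := by
      have := heq.symm
      rw [hh, div_eq_zero_iff] at this
      rcases this with h1 | h1
      · exact h1
      · exact absurd h1 (ne_of_gt hNpos)
    have hxa : x = a := le_antisymm (by have := hx.2; linarith) hx.1
    exact ⟨0, Nat.zero_le _, by simp [hxa, ← heq]⟩
  · set i0 : ℤ := ⌊(x - a) / h⌋ with hi0
    have hfr0 : (0:ℝ) ≤ (x - a) / h := div_nonneg (by linarith [hx.1]) (le_of_lt hpos)
    have hi00 : 0 ≤ i0 := Int.floor_nonneg.2 hfr0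
    have hfrN : (x - a) / h ≤ N := by
      rw [div_le_iff₀ hpos, hh]
      have : (N:ℝ) * ((b - a) / N) = b - a := by field_simp
      rw [this]
      linarith [hx.2]
    refine ⟨i0.toNat, ?_, ?_⟩
    · have h1 : (i0 : ℝ) ≤ N := le_trans (Int.floor_le _) hfrN
      have h2 : i0 ≤ (N : ℤ) := by exact_mod_cast h1
      omega
    · have hcast : ((i0.toNat : ℕ) : ℝ) = (i0 : ℝ) := by
        exact_mod_cast Int.toNat_of_nonneg hi00
      rw [show ((i0.toNat : ℕ) : ℝ) * ((b - a) / N) = (i0 : ℝ) * h from by rw [hcast, hh]]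
      have hle : (i0 : ℝ) ≤ (x - a) / h := Int.floor_le _
      have hlt : (x - a) / h < (i0 : ℝ) + 1 := Int.lt_floor_add_one _
      rw [abs_le]
      constructor
      · have : (i0 : ℝ) * h ≤ x - a := (le_div_iff₀ hpos).1 hle
        linarith
      · have : x - a < ((i0 : ℝ) + 1) * h := (div_lt_iff₀ hpos).1 hlt
        nlinarith [hpos]

lemma unif_Icc (Fn : ℕ → ℝ → ℝ) (F : ℝ → ℝ)
    (hFn : ∀ n, ConvexOn ℝ univ (Fn n)) (hFc : ConvexOn ℝ univ F)
    (hpt : ∀ x : ℝ, Tendsto (fun n => Fn n x) atTop (nhds (F x)))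
    (a b : ℝ) : TendstoUniformlyOn (fun n => Fn n) F atTop (Icc a b) := by
  rcases le_or_gt a b with hab | hab
  swap
  · rw [Icc_eq_empty (not_le.2 hab)]; exact tendstoUniformlyOn_empty
  set M : ℝ := max |(F a - F (a-1)) / (a - (a-1))| |(F (b+1) - F b) / ((b+1) - b)| + 1 with hM
  have hM0 : 0 < M := by
    have := le_trans (abs_nonneg ((F a - F (a-1)) / (a - (a-1)))) (le_max_left _ |(F (b+1) - F b) / ((b+1) - b)|)
    rw [hM]; linarith
  have hMF : max |(F a - F (a-1)) / (a - (a-1))| |(F (b+1) - F b) / ((b+1) - b)| ≤ M := by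
    rw [hM]; linarith
  have hMn : Tendsto (fun n => max |(Fn n a - Fn n (a-1)) / (a - (a-1))|
      |(Fn n (b+1) - Fn n b) / ((b+1) - b)|) atTop
      (nhds (max |(F a - F (a-1)) / (a - (a-1))| |(F (b+1) - F b) / ((b+1) - b)|)) :=
    ((((hpt a).sub (hpt (a-1))).div_const _).abs).max ((((hpt (b+1)).sub (hpt b)).div_const _).abs)
  have hMev : ∀ᶠ n in atTop, max |(Fn n a - Fn n (a-1)) / (a - (a-1))|
      |(Fn n (b+1) - Fn n b) / ((b+1) - b)| ≤ M :=
    (hMn.eventually_lt_const (lt_add_one _)).mono fun n h => le_of_lt h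
  rw [Metric.tendstoUniformlyOn_iff]
  intro ε hε
  obtain ⟨N, hN⟩ := exists_nat_gt (max 1 ((b - a) / (ε / (3 * M))))
  have hN1 : (1:ℝ) < N := lt_of_le_of_lt (le_max_left _ _) hN
  have hN0 : 0 < N := by exact_mod_cast lt_trans zero_lt_one hN1
  have hNr : (0:ℝ) < N := by exact_mod_cast hN0
  have hstep : (b - a) / N < ε / (3 * M) := by
    have h1 : (b - a) / (ε/(3*M)) < N := lt_of_le_of_lt (le_max_right _ _) hN
    have h2 : b - a < (N:ℝ) * (ε/(3*M)) := (div_lt_iff₀ (by positivity)).1 h1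
    rw [div_lt_iff₀ hNr]
    linarith [h2, mul_comm (N:ℝ) (ε/(3*M))]
  set h : ℝ := (b - a) / N with hh
  have hh0 : 0 ≤ h := div_nonneg (by linarith) (le_of_lt hNr)
  have hMh : M * h < ε/3 := by
    have := mul_lt_mul_of_pos_left hstep hM0
    have heq : M * (ε/(3*M)) = ε/3 := by field_simp
    rw [hh]; rw [heq] at this; exact this
  have hnodes : ∀ᶠ n in atTop, ∀ i ∈ Finset.range (N+1),
      dist (Fn n (a + i*h)) (F (a + i*h)) < ε/3 := by
    rw [eventually_all_finset]
    intro i _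
    exact (Metric.tendsto_nhds.1 (hpt _)) (ε/3) (by positivity)
  filter_upwards [hMev, hnodes] with n hLip hnode
  intro x hx
  show dist (F x) (Fn n x) < ε
  obtain ⟨i, hiN, hnear⟩ := exists_node hN0 hx
  set p : ℝ := a + i * h with hp
  have hih : (i:ℝ) * h ≤ b - a := by
    have h1 : (i:ℝ) ≤ N := by exact_mod_cast hiN
    have h2 : (i:ℝ) * h ≤ (N:ℝ) * h := mul_le_mul_of_nonneg_right h1 hh0
    have h3 : (N:ℝ) * h = b - a := by rw [hh]; field_simp
    linarith
  have hpmem : p ∈ Icc a b := by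
    constructor
    · rw [hp]; nlinarith [mul_nonneg (Nat.cast_nonneg i) hh0]
    · rw [hp]; linarith
  have hFlip : |F x - F p| ≤ M * |x - p| := convex_lip_abs hFc hpmem hx hMF
  have hFnlip : |Fn n x - Fn n p| ≤ M * |x - p| := convex_lip_abs (hFn n) hpmem hx hLip
  have hxp : |x - p| ≤ h := hnear
  have hnode' : |Fn n p - F p| < ε/3 := by
    have := hnode i (Finset.mem_range.2 (by omega))
    rwa [Real.dist_eq] at this
  have hMxp : M * |x - p| < ε/3 := lt_of_le_of_lt (mul_le_mul_of_nonneg_left hxp hM0.le) hMh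
  rw [Real.dist_eq, abs_lt]
  have e1 := abs_le.1 hFlip
  have e2 := abs_le.1 hFnlip
  have e3 := abs_lt.1 hnode'
  clear_value M h p
  constructor <;> linarith [e1.1, e1.2, e2.1, e2.2, e3.1, e3.2, hMxp]

theorem stmt8 (Fn : ℕ → ℝ → ℝ) (F : ℝ → ℝ)
    (hFn : ∀ n, ConvexOn ℝ univ (Fn n))
    (hF : StrictConvexOn ℝ univ F)
    (hconv : ∀ q : ℚ, Tendsto (fun n => Fn n (q : ℝ)) atTop (nhds (F (q : ℝ))))
    (hcoerc : Tendsto F (cocompact ℝ) atTop)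
    (cs : ℕ → ℝ) (c : ℝ)
    (hmin : ∀ n, ∀ x, Fn n (cs n) ≤ Fn n x)
    (huniq : ∀ n, ∀ x, (∀ y, Fn n x ≤ Fn n y) → x = cs n)
    (hminF : ∀ x, F c ≤ F x) :
    (∀ x : ℝ, Tendsto (fun n => Fn n x) atTop (nhds (F x)))
    ∧ (∀ K : Set ℝ, IsCompact K → TendstoUniformlyOn (fun n => Fn n) F atTop K)
    ∧ Tendsto cs atTop (nhds c) := by
  have hFc : ConvexOn ℝ univ F := hF.convexOn
  have hpt : ∀ x : ℝ, Tendsto (fun n => Fn n x) atTop (nhds (F x)) :=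
    ptwise Fn F hFn hFc hconv
  refine ⟨hpt, ?_, ?_⟩
  · intro K hK
    obtain ⟨R, hR⟩ := hK.isBounded.subset_closedBall 0
    have hsub : K ⊆ Icc (0 - R) (0 + R) := by rwa [← Real.closedBall_eq_Icc]
    exact (unif_Icc Fn F hFn hFc hpt _ _).mono hsub
  · have hstrict : ∀ y : ℝ, y ≠ c → F c < F y := by
      intro y hy
      rcases lt_or_eq_of_le (hminF y) with hlt | heq
      · exact hlt
      · exfalso
        have hm := hF.2 (mem_univ c) (mem_univ y) (Ne.symm hy)
          (by norm_num : (0:ℝ) < 1/2) (by norm_num : (0:ℝ) < 1/2) (by norm_num : (1:ℝ)/2 + 1/2 = 1)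
        simp only [smul_eq_mul] at hm
        have hmin2 := hminF ((1/2) * c + (1/2) * y)
        rw [← heq] at hm
        linarith
    rw [Metric.tendsto_nhds]
    intro ε hε
    have hδ1 : 0 < F (c - ε) - F c := sub_pos.2 (hstrict _ (ne_of_lt (by linarith)))
    have hδ2 : 0 < F (c + ε) - F c := sub_pos.2 (hstrict _ (ne_of_gt (by linarith)))
    set δ : ℝ := min (F (c - ε) - F c) (F (c + ε) - F c) with hδdef
    have hδ : 0 < δ := lt_min hδ1 hδ2
    have E1 := (Metric.tendsto_nhds.1 (hpt c)) (δ/2) (by positivity)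
    have E2 := (Metric.tendsto_nhds.1 (hpt (c - ε))) (δ/2) (by positivity)
    have E3 := (Metric.tendsto_nhds.1 (hpt (c + ε))) (δ/2) (by positivity)
    filter_upwards [E1, E2, E3] with n h1 h2 h3
    rw [Real.dist_eq] at h1 h2 h3 ⊢
    by_contra hcon
    push_neg at hcon
    have h1' := abs_lt.1 h1
    rcases le_abs.1 hcon with hge | hge
    · have hy : c + ε ∈ segment ℝ c (cs n) := by
        rw [segment_eq_Icc (by linarith : c ≤ cs n)]
        exact ⟨by linarith, by linarith⟩
      have hle := (hFn n).le_on_segment (mem_univ c) (mem_univ (cs n)) hy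
      rw [max_eq_left (hmin n c)] at hle
      have h3' := abs_lt.1 h3
      have hFy : δ ≤ F (c + ε) - F c := by rw [hδdef]; exact min_le_right _ _
      linarith [h1'.2, h3'.1]
    · have hy : c - ε ∈ segment ℝ (cs n) c := by
        rw [segment_eq_Icc (by linarith : cs n ≤ c)]
        exact ⟨by linarith, by linarith⟩
      have hle := (hFn n).le_on_segment (mem_univ (cs n)) (mem_univ c) hy
      rw [max_eq_right (hmin n c)] at hle
      have h2' := abs_lt.1 h2
      have hFy : δ ≤ F (c - ε) - F c := by rw [hδdef]; exact min_le_left _ _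
      linarith [h1'.2, h2'.1]
end
end

section
/- Let Q be strictly convex, even, nonnegative; let A ≤ B be reals, ε > 0, and φ : J → [A,B] measurable with W(φ,J) < Q(ε). Then either 𝒞(φ,J) ≥ A + ε or V_{A+ε}(φ,J) ≤ Q(ε); and likewise either 𝒞(φ,J) ≤ B − ε or V_{B−ε}(φ,J) ≤ Q(ε). -/
/-!
By the symmetry `φ ↦ -φ` it suffices to treat the threshold `c = A + ε`. If `𝒞(φ, J) < c`, then
`I(d) = ∫_J Q(φ - d)` is convex and minimal at `𝒞`, hence nondecreasing on `[c, ∞)`, so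
`g = Q'₋(φ - c)` satisfies `∫_J g ≤ 0`. Put `f = Q(φ - c) - Q(ε)`. Wherever `g ≤ 0` we have
`f ≤ 0`, because `Q` is even and `φ - c ≥ -ε`; and on every subinterval `L` with `∫_L g = 0`
the subgradient inequality `Q(φ - d) ≥ Q(φ - c) - (d - c) g` shows that `c` minimizes
`d ↦ V_d(φ, L)`, so `W(φ, J) < Q(ε)` gives `∫_L f < 0`. A rising sun argument for the primitive
`G` of `g` then yields `∫_J f ≤ 0`, i.e. `V_c(φ, J) ≤ Q(ε)`: almost every point where `G` attains
its running minimum has `g ≤ 0`, and the complementary intervals are intervals on which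
`∫ g = 0`.
-/

open MeasureTheory Set Filter Topology
open scoped ENNReal

noncomputable section

abbrev leftDeriv (f : ℝ → ℝ) (x : ℝ) : ℝ := derivWithin f (Iio x) x

lemma integrableOn_comp_of_mapsTo {F u : ℝ → ℝ} {s : Set ℝ} {m M : ℝ} (hF : Measurable F)
    (hFb : Bornology.IsBounded (F '' Icc m M)) (hu : Measurable u) (hum : ∀ x ∈ s, u x ∈ Icc m M)
    (hs : MeasurableSet s) (hs' : volume s ≠ ∞) : IntegrableOn (fun x => F (u x)) s := by
  obtain ⟨C, hC⟩ := isBounded_iff_forall_norm_le.1 hFb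
  exact Measure.integrableOn_of_bounded hs' (hF.comp hu).aestronglyMeasurable
    (ae_restrict_of_forall_mem hs fun x hx => hC _ ⟨u x, hum x hx, rfl⟩)

lemma MeasureTheory.IntegrableOn.intervalIntegrable_of_mem_Icc {g : ℝ → ℝ} {a b s t : ℝ}
    (hg : IntegrableOn g (Icc a b)) (hs : s ∈ Icc a b) (ht : t ∈ Icc a b) :
    IntervalIntegrable g volume s t :=
  (hg.mono_set (uIcc_subset_Icc hs ht)).intervalIntegrable

lemma continuousOn_primitive_of_le {g : ℝ → ℝ} {a b : ℝ} (hab : a ≤ b)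
    (hg : IntegrableOn g (Icc a b)) :
    ContinuousOn (fun t => ∫ x in a..t, g x) (Icc a b) := by
  simpa [uIcc_of_le hab] using intervalIntegral.continuousOn_primitive_interval
    (a := a) (b := b) (by rwa [uIcc_of_le hab])

namespace ConvexOn

variable {Q : ℝ → ℝ}

lemma monotone_leftDeriv (hQ : ConvexOn ℝ univ Q) : Monotone (leftDeriv Q) :=
  fun x y hxy => hQ.monotoneOn_leftDeriv (by simp) (by simp) hxy

lemma slope_le_leftDeriv_of_lt (hQ : ConvexOn ℝ univ Q) {x y : ℝ} (hxy : x < y) :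
    slope Q x y ≤ leftDeriv Q y :=
  hQ.slope_le_leftDeriv_of_mem_interior trivial (by simp) hxy

lemma leftDeriv_le_slope_of_lt (hQ : ConvexOn ℝ univ Q) {x y : ℝ} (hxy : x < y) :
    leftDeriv Q x ≤ slope Q x y :=
  (hQ.leftDeriv_le_rightDeriv_of_mem_interior (by simp)).trans <|
    hQ.rightDeriv_le_slope_of_mem_interior (by simp) trivial hxy

lemma sub_mul_leftDeriv_le (hQ : ConvexOn ℝ univ Q) (y h : ℝ) :
    Q y - h * leftDeriv Q y ≤ Q (y - h) := by
  rcases lt_trichotomy h 0 with hh | rfl | hh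
  · have := hQ.leftDeriv_le_slope_of_lt (x := y) (y := y - h) (by linarith)
    rw [slope_def_field, le_div_iff₀ (by linarith)] at this
    nlinarith
  · simp
  · have := hQ.slope_le_leftDeriv_of_lt (x := y - h) (y := y) (by linarith)
    rw [slope_def_field, div_le_iff₀ (by linarith)] at this
    nlinarith

lemma slope_mem_Icc_leftDeriv (hQ : ConvexOn ℝ univ Q) {y δ : ℝ} (hδ : δ ∈ Ioc 0 1) :
    slope Q (y - δ) y ∈ Icc (leftDeriv Q (y - 1)) (leftDeriv Q y) :=
  ⟨(hQ.monotone_leftDeriv (by linarith [hδ.2])).trans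
      (hQ.leftDeriv_le_slope_of_lt (by linarith [hδ.1])),
    hQ.slope_le_leftDeriv_of_lt (by linarith [hδ.1])⟩

lemma tendsto_slope_leftDeriv (hQ : ConvexOn ℝ univ Q) (y : ℝ) :
    Tendsto (fun δ => slope Q (y - δ) y) (𝓝[>] 0) (𝓝 (leftDeriv Q y)) := by
  have hd := hasDerivWithinAt_iff_tendsto_slope.1
    (hQ.hasDerivWithinAt_leftDeriv_of_mem_interior (x := y) (by simp))
  have hshift : Tendsto (fun δ : ℝ => y - δ) (𝓝[>] 0) (𝓝[Iio y \ {y}] y) := by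
    refine tendsto_nhdsWithin_iff.2 ⟨?_, ?_⟩
    · exact ((continuous_sub_left y).tendsto' 0 y (sub_zero y)).mono_left nhdsWithin_le_nhds
    · filter_upwards [self_mem_nhdsWithin] with δ (hδ : 0 < δ)
      exact ⟨by simpa using hδ, by simpa using hδ.ne'⟩
  exact (hd.comp hshift).congr fun δ => slope_comm Q y (y - δ)

lemma le_of_abs_le (hQ : ConvexOn ℝ univ Q) (hQe : ∀ t, Q (-t) = Q t) {u v : ℝ}
    (huv : |u| ≤ |v|) : Q u ≤ Q v := by
  have hseg : u ∈ segment ℝ (-|v|) |v| := by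
    rw [segment_eq_Icc (by simp)]
    exact abs_le.1 huv
  have hv : Q |v| = Q v := by
    rcases abs_choice v with h | h <;> simp [h, hQe]
  simpa [hQe, hv] using hQ.le_on_segment trivial trivial hseg

lemma le_of_leftDeriv_nonpos (hQ : ConvexOn ℝ univ Q) (hQe : ∀ t, Q (-t) = Q t) {ε y : ℝ}
    (hy : -ε ≤ y) (h : leftDeriv Q y ≤ 0) : Q y ≤ Q ε := by
  rcases le_or_gt y 0 with hy0 | hy0
  · exact hQ.le_of_abs_le hQe (by rw [abs_of_nonpos hy0]; exact (neg_le.1 hy).trans (le_abs_self ε))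
  · have hslope := (hQ.slope_le_leftDeriv_of_lt hy0).trans h
    rw [slope_def_field, sub_zero, div_nonpos_iff] at hslope
    have h0 : Q 0 ≤ Q ε := hQ.le_of_abs_le hQe (by simp)
    rcases hslope with ⟨-, h'⟩ | ⟨h', -⟩ <;> linarith

lemma continuous_of_univ (hQ : ConvexOn ℝ univ Q) : Continuous Q :=
  continuousOn_univ.1 (hQ.continuousOn isOpen_univ)

lemma isBounded_image_Icc (hQ : ConvexOn ℝ univ Q) (m M : ℝ) :
    Bornology.IsBounded (Q '' Icc m M) :=
  (isCompact_Icc.image hQ.continuous_of_univ).isBounded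

lemma isBounded_leftDeriv_image_Icc (hQ : ConvexOn ℝ univ Q) (m M : ℝ) :
    Bornology.IsBounded (leftDeriv Q '' Icc m M) :=
  Metric.isBounded_Icc _ _ |>.subset hQ.monotone_leftDeriv.image_Icc_subset

lemma integrableOn_comp {u : ℝ → ℝ} {a b m M : ℝ} (hQ : ConvexOn ℝ univ Q) (hu : Measurable u)
    (hum : ∀ x ∈ Icc a b, u x ∈ Icc m M) : IntegrableOn (fun x => Q (u x)) (Icc a b) :=
  integrableOn_comp_of_mapsTo hQ.continuous_of_univ.measurable (hQ.isBounded_image_Icc m M) hu hum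
    measurableSet_Icc measure_Icc_lt_top.ne

lemma integrableOn_leftDeriv_comp {u : ℝ → ℝ} {a b m M : ℝ} (hQ : ConvexOn ℝ univ Q)
    (hu : Measurable u) (hum : ∀ x ∈ Icc a b, u x ∈ Icc m M) :
    IntegrableOn (fun x => leftDeriv Q (u x)) (Icc a b) :=
  integrableOn_comp_of_mapsTo hQ.monotone_leftDeriv.measurable
    (hQ.isBounded_leftDeriv_image_Icc m M) hu hum measurableSet_Icc measure_Icc_lt_top.ne

lemma convexOn_integral_comp_sub (hQ : ConvexOn ℝ univ Q) {φ : ℝ → ℝ} {a b : ℝ} (hab : a ≤ b)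
    (hint : ∀ c, IntervalIntegrable (fun x => Q (φ x - c)) volume a b) :
    ConvexOn ℝ univ (fun c => ∫ x in a..b, Q (φ x - c)) := by
  refine ⟨convex_univ, fun c₁ _ c₂ _ θ₁ θ₂ h₁ h₂ hθ => ?_⟩
  simp only [smul_eq_mul, ← intervalIntegral.integral_const_mul]
  rw [← intervalIntegral.integral_add ((hint c₁).const_mul θ₁) ((hint c₂).const_mul θ₂)]
  refine intervalIntegral.integral_mono_on hab (hint _) (((hint c₁).const_mul θ₁).add
    ((hint c₂).const_mul θ₂)) fun x _ => ?_
  have hcomb : φ x - (θ₁ * c₁ + θ₂ * c₂) = θ₁ • (φ x - c₁) + θ₂ • (φ x - c₂) := by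
    simp only [smul_eq_mul]; linear_combination (-φ x) * hθ
  rw [hcomb]
  exact hQ.2 trivial trivial h₁ h₂ hθ

/-- By dominated convergence, `∫ Q'₋ ∘ u` is the limit of the difference quotients
`(∫ Q ∘ u - ∫ Q ∘ (u - δ)) / δ`, which are nonpositive. -/
lemma integral_leftDeriv_comp_nonpos (hQ : ConvexOn ℝ univ Q) {u : ℝ → ℝ} {a b m M : ℝ}
    (hab : a ≤ b) (hu : Measurable u) (hum : ∀ x ∈ Icc a b, u x ∈ Icc m M)
    (hmono : ∀ δ > 0, ∫ x in a..b, Q (u x) ≤ ∫ x in a..b, Q (u x - δ)) :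
    ∫ x in a..b, leftDeriv Q (u x) ≤ 0 := by
  have hQm : Measurable Q := hQ.continuous_of_univ.measurable
  have hint : ∀ δ, IntervalIntegrable (fun x => Q (u x - δ)) volume a b := fun δ =>
    (intervalIntegrable_iff_integrableOn_Icc_of_le hab).2 <| hQ.integrableOn_comp (m := m - δ)
      (M := M - δ) (hu.sub_const δ) fun x hx =>
        ⟨sub_le_sub_right (hum x hx).1 δ, sub_le_sub_right (hum x hx).2 δ⟩
  have hquot : ∀ δ > 0, ∫ x in a..b, slope Q (u x - δ) (u x) ≤ 0 := fun δ hδ => by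
    have hsub := intervalIntegral.integral_sub (by simpa using hint 0) (hint δ)
    simp only [slope_def_field, sub_sub_cancel, intervalIntegral.integral_div, hsub]
    exact div_nonpos_of_nonpos_of_nonneg (by linarith [hmono δ hδ]) hδ.le
  have hbound : ∀ δ ∈ Ioc (0 : ℝ) 1, ∀ x ∈ Icc a b,
      ‖slope Q (u x - δ) (u x)‖ ≤ max |leftDeriv Q (m - 1)| |leftDeriv Q M| := fun δ hδ x hx => by
    have h := hQ.slope_mem_Icc_leftDeriv (y := u x) hδ
    exact abs_le_max_abs_abs ((hQ.monotone_leftDeriv (by linarith [(hum x hx).1])).trans h.1)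
      (h.2.trans (hQ.monotone_leftDeriv (hum x hx).2))
  have hlim : Tendsto (fun δ => ∫ x in a..b, slope Q (u x - δ) (u x)) (𝓝[>] 0)
      (𝓝 (∫ x in a..b, leftDeriv Q (u x))) := by
    refine intervalIntegral.tendsto_integral_filter_of_dominated_convergence
      (fun _ => max |leftDeriv Q (m - 1)| |leftDeriv Q M|)
      (Eventually.of_forall fun δ => ?_) ?_ intervalIntegrable_const
      (ae_of_all _ fun x _ => hQ.tendsto_slope_leftDeriv (u x))
    · simp only [slope_def_field]
      exact (((hQm.comp hu).sub (hQm.comp (hu.sub_const δ))).div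
        (hu.sub (hu.sub_const δ))).aestronglyMeasurable
    · filter_upwards [Ioc_mem_nhdsGT one_pos] with δ hδ
      exact ae_of_all _ fun x hx =>
        hbound δ hδ x (Ioc_subset_Icc_self (by rwa [uIoc_of_le hab] at hx))
  exact le_of_tendsto hlim (eventually_nhdsWithin_of_forall hquot)

lemma integral_comp_sub_le_of_integral_leftDeriv_eq_zero (hQ : ConvexOn ℝ univ Q)
    {φ : ℝ → ℝ} {s t c d : ℝ} (hst : s ≤ t)
    (hc : IntervalIntegrable (fun x => Q (φ x - c)) volume s t)
    (hd : IntervalIntegrable (fun x => Q (φ x - d)) volume s t)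
    (hg : IntervalIntegrable (fun x => leftDeriv Q (φ x - c)) volume s t)
    (hg0 : ∫ x in s..t, leftDeriv Q (φ x - c) = 0) :
    ∫ x in s..t, Q (φ x - c) ≤ ∫ x in s..t, Q (φ x - d) := by
  have h := intervalIntegral.integral_mono_on hst (hc.sub (hg.const_mul (d - c))) hd fun x _ => by
    simpa only [sub_sub_sub_cancel_right] using hQ.sub_mul_leftDeriv_le (φ x - c) (d - c)
  rwa [intervalIntegral.integral_sub hc (hg.const_mul _), intervalIntegral.integral_const_mul, hg0,
    mul_zero, sub_zero] at h

end ConvexOn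

section Gaps

def gaps (T : Set ℝ) : Set (ℝ × ℝ) :=
  {p | p.1 ∈ T ∧ p.2 ∈ T ∧ p.1 < p.2 ∧ Disjoint (Ioo p.1 p.2) T}

variable {T : Set ℝ}

lemma pairwiseDisjoint_gaps (T : Set ℝ) : (gaps T).PairwiseDisjoint fun p => Ioo p.1 p.2 := by
  rintro p ⟨hp₁, hp₂, -, hpT⟩ q ⟨hq₁, hq₂, -, hqT⟩ hpq
  refine Set.disjoint_left.2 fun y ⟨hpy, hyp⟩ ⟨hqy, hyq⟩ => hpq (Prod.ext ?_ ?_)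
  · by_contra h
    rcases lt_or_gt_of_ne h with h | h
    · exact hpT.ne_of_mem ⟨h, hqy.trans hyp⟩ hq₁ rfl
    · exact hqT.ne_of_mem ⟨h, hpy.trans hyq⟩ hp₁ rfl
  · by_contra h
    rcases lt_or_gt_of_ne h with h | h
    · exact hqT.ne_of_mem ⟨hqy.trans hyp, h⟩ hp₂ rfl
    · exact hpT.ne_of_mem ⟨hpy.trans hyq, h⟩ hq₂ rfl

lemma countable_gaps (T : Set ℝ) : (gaps T).Countable :=
  (pairwiseDisjoint_gaps T).countable_of_isOpen (fun _ _ => isOpen_Ioo)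
    fun _ hp => nonempty_Ioo.2 hp.2.2.1

lemma Ioo_diff_eq_biUnion_gaps (hT : IsClosed T) {u v : ℝ} (hu : u ∈ T) (hv : v ∈ T) :
    Ioo u v \ T = ⋃ p ∈ {p ∈ gaps T | u ≤ p.1 ∧ p.2 ≤ v}, Ioo p.1 p.2 := by
  ext x
  simp only [mem_iUnion, exists_prop]
  constructor
  · rintro ⟨hx, hxT⟩
    have hbddL : BddAbove (T ∩ Icc u x) := bddAbove_Icc.mono inter_subset_right
    have hbddR : BddBelow (T ∩ Icc x v) := bddBelow_Icc.mono inter_subset_right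
    have hα := (hT.inter isClosed_Icc).csSup_mem ⟨u, hu, le_rfl, hx.1.le⟩ hbddL
    have hβ := (hT.inter isClosed_Icc).csInf_mem ⟨v, hv, hx.2.le, le_rfl⟩ hbddR
    have hαx : sSup (T ∩ Icc u x) < x := hα.2.2.lt_of_ne fun h => hxT (h ▸ hα.1)
    have hxβ : x < sInf (T ∩ Icc x v) := hβ.2.1.lt_of_ne' fun h => hxT (h ▸ hβ.1)
    refine ⟨(_, _), ⟨⟨hα.1, hβ.1, hαx.trans hxβ, Set.disjoint_left.2 ?_⟩, hα.2.1, hβ.2.2⟩,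
      hαx, hxβ⟩
    rintro y ⟨hαy, hyβ⟩ hyT
    rcases le_total y x with hyx | hxy
    · exact (le_csSup hbddL ⟨hyT, hα.2.1.trans hαy.le, hyx⟩).not_gt hαy
    · exact (csInf_le hbddR ⟨hyT, hxy, hyβ.le.trans hβ.2.2⟩).not_gt hyβ
  · rintro ⟨p, ⟨⟨-, -, -, hpT⟩, hup, hpv⟩, hx⟩
    exact ⟨⟨hup.trans_lt hx.1, hx.2.trans_le hpv⟩, hpT.notMem_of_mem_left hx⟩

lemma setIntegral_Ioo_diff_nonpos (hT : IsClosed T) {u v : ℝ} (hu : u ∈ T) (hv : v ∈ T)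
    {f : ℝ → ℝ} (hf : IntegrableOn f (Icc u v))
    (hgap : ∀ p ∈ gaps T, u ≤ p.1 → p.2 ≤ v → ∫ x in Ioo p.1 p.2, f x ≤ 0) :
    ∫ x in Ioo u v \ T, f x ≤ 0 := by
  set S := {p ∈ gaps T | u ≤ p.1 ∧ p.2 ≤ v}
  have : Countable S := ((countable_gaps T).mono (sep_subset _ _)).to_subtype
  rw [Ioo_diff_eq_biUnion_gaps hT hu hv, biUnion_eq_iUnion, integral_iUnion (ι := S)
    (fun _ => measurableSet_Ioo)
    (fun p q hpq => pairwiseDisjoint_gaps T p.2.1 q.2.1 (Subtype.coe_injective.ne hpq))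
    (hf.mono_set (iUnion_subset fun p =>
      Ioo_subset_Icc_self.trans (Icc_subset_Icc p.2.2.1 p.2.2.2)))]
  exact tsum_nonpos fun p => hgap p p.2.1 p.2.2.1 p.2.2.2

end Gaps

section RunningMin

def runningMinSet (G : ℝ → ℝ) (a b : ℝ) : Set ℝ :=
  {x ∈ Icc a b | ∀ s ∈ Icc a x, G x ≤ G s}

variable {G : ℝ → ℝ} {a b : ℝ}

lemma left_mem_runningMinSet (hab : a ≤ b) : a ∈ runningMinSet G a b :=
  ⟨left_mem_Icc.2 hab, fun s hs => by rw [le_antisymm hs.2 hs.1]⟩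

lemma isClosed_runningMinSet (hG : ContinuousOn G (Icc a b)) :
    IsClosed (runningMinSet G a b) := by
  refine closure_subset_iff_isClosed.1 fun x hx => ?_
  have hxI : x ∈ Icc a b := closure_minimal (fun y hy => hy.1) isClosed_Icc hx
  refine ⟨hxI, fun s hs => ?_⟩
  rcases hs.2.eq_or_lt with rfl | hsx
  · exact le_rfl
  · have hK := hG.preimage_isClosed_of_isClosed isClosed_Icc (isClosed_Iic (a := G s))
    have hsub : Ioi s ∩ runningMinSet G a b ⊆ Icc a b ∩ G ⁻¹' Iic (G s) :=
      fun y hy => ⟨hy.2.1, hy.2.2 s ⟨hs.1, hy.1.le⟩⟩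
    exact (closure_minimal hsub hK (isOpen_Ioi.inter_closure ⟨hsx, hx⟩)).2

lemma apply_snd_eq_fst_of_mem_gaps (hG : ContinuousOn G (Icc a b)) {p : ℝ × ℝ}
    (hp : p ∈ gaps (runningMinSet G a b)) : G p.2 = G p.1 := by
  obtain ⟨hα, hβ, hαβ, hdisj⟩ := hp
  have habove : ∀ u ∈ Ioo p.1 p.2, G p.1 < G u := by
    intro u hu
    by_contra! hle
    have hsub : Icc p.1 u ⊆ Icc a b := Icc_subset_Icc hα.1.1 (hu.2.le.trans hβ.1.2)
    obtain ⟨v, hv, hvmin⟩ :=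
      isCompact_Icc.exists_isMinOn (nonempty_Icc.2 hu.1.le) (hG.mono hsub)
    obtain ⟨w, hw, hwmin⟩ : ∃ w ∈ Ioc p.1 u, ∀ s ∈ Icc p.1 u, G w ≤ G s := by
      rcases hv.1.eq_or_lt with hv₁ | hv₁
      · exact ⟨u, ⟨hu.1, le_rfl⟩, fun s hs => hle.trans (hv₁ ▸ hvmin hs)⟩
      · exact ⟨v, ⟨hv₁, hv.2⟩, fun s hs => hvmin hs⟩
    have hwT : w ∈ runningMinSet G a b := by
      refine ⟨hsub ⟨hw.1.le, hw.2⟩, fun s hs => ?_⟩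
      rcases le_total s p.1 with hs₁ | hs₁
      · exact (hwmin _ (left_mem_Icc.2 hu.1.le)).trans (hα.2 s ⟨hs.1, hs₁⟩)
      · exact hwmin s ⟨hs₁, hs.2.trans hw.2⟩
    exact hdisj.ne_of_mem ⟨hw.1, hw.2.trans_lt hu.2⟩ hwT rfl
  have hK := hG.preimage_isClosed_of_isClosed isClosed_Icc (isClosed_Ici (a := G p.1))
  have hsub : Ioo p.1 p.2 ⊆ Icc a b ∩ G ⁻¹' Ici (G p.1) :=
    fun u hu => ⟨⟨hα.1.1.trans hu.1.le, hu.2.le.trans hβ.1.2⟩, (habove u hu).le⟩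
  have hge : G p.1 ≤ G p.2 :=
    (closure_minimal hsub hK (by rw [closure_Ioo hαβ.ne]; exact right_mem_Icc.2 hαβ.le)).2
  exact le_antisymm (hβ.2 _ ⟨hα.1.1, hαβ.le⟩) hge

lemma exists_mem_runningMinSet_eq (hab : a ≤ b) (hG : ContinuousOn G (Icc a b))
    (hba : G b ≤ G a) : ∃ σ ∈ runningMinSet G a b, G σ = G b := by
  set S := Icc a b ∩ G ⁻¹' Iic (G b)
  have hbdd : BddBelow S := bddBelow_Icc.mono inter_subset_left
  have hσ : sInf S ∈ S := (hG.preimage_isClosed_of_isClosed isClosed_Icc isClosed_Iic).csInf_mem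
    ⟨b, right_mem_Icc.2 hab, le_refl (G b)⟩ hbdd
  -- `sInf S` is the first point where `G` drops to `G b`; by the intermediate value theorem it
  -- does not jump below `G b` there.
  have hfirst : ∀ s ∈ Icc a (sInf S), G s ≤ G b → s = sInf S := fun s hs hsb =>
    le_antisymm hs.2 (csInf_le hbdd ⟨⟨hs.1, hs.2.trans hσ.1.2⟩, hsb⟩)
  obtain ⟨s, hs, hGs⟩ := intermediate_value_Icc' hσ.1.1 (hG.mono (Icc_subset_Icc_right hσ.1.2))
    ⟨hσ.2, hba⟩
  refine ⟨sInf S, ⟨hσ.1, fun t ht => ?_⟩, hfirst s hs hGs.le ▸ hGs⟩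
  by_contra! hlt
  exact hlt.ne (congrArg G (hfirst t ht (hlt.le.trans hσ.2)))

lemma nonpos_of_hasDerivAt_of_mem_runningMinSet {x g' : ℝ} (hx : x ∈ runningMinSet G a b)
    (hacc : (𝓝[runningMinSet G a b ∩ Ioi x] x).NeBot) (hd : HasDerivAt G g' x) : g' ≤ 0 := by
  have hslope := hasDerivWithinAt_iff_tendsto_slope.1
    (hd.hasDerivWithinAt (s := runningMinSet G a b ∩ Ioi x))
  rw [sdiff_singleton_eq_self fun h => lt_irrefl x h.2] at hslope
  refine le_of_tendsto hslope (eventually_nhdsWithin_of_forall fun t ht => ?_)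
  rw [slope_def_field]
  exact div_nonpos_of_nonpos_of_nonneg (sub_nonpos.2 (ht.1.2 x ⟨hx.1.1, ht.2.le⟩))
    (sub_nonneg.2 ht.2.le)

/-- At almost every point the primitive has derivative `g x` (Lebesgue differentiation), and
only countably many points of the running-minimum set are isolated in it from the right. -/
lemma ae_nonpos_of_mem_runningMinSet {g : ℝ → ℝ} (hab : a ≤ b) (hg : IntegrableOn g (Icc a b)) :
    ∀ᵐ x, x ∈ runningMinSet (fun t => ∫ y in a..t, g y) a b → g x ≤ 0 := by
  set T := runningMinSet (fun t => ∫ y in a..t, g y) a b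
  have hderiv := ((intervalIntegrable_iff_integrableOn_Icc_of_le hab).2 hg).ae_hasDerivAt_integral
  have hiso : {x ∈ T | 𝓝[T ∩ Ioi x] x = ⊥}.Countable := countable_setOfPred_isolated_right_within
  filter_upwards [hderiv, hiso.ae_notMem volume] with x hx hxiso hxT
  exact nonpos_of_hasDerivAt_of_mem_runningMinSet hxT (neBot_iff.2 fun h => hxiso ⟨hxT, h⟩)
    (hx (Icc_subset_uIcc hxT.1) a left_mem_uIcc)

end RunningMin

section RisingSun

variable {f g : ℝ → ℝ} {a b : ℝ}

lemma integral_nonpos_of_mem_runningMinSet (hab : a ≤ b) (hf : IntegrableOn f (Icc a b))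
    (hg : IntegrableOn g (Icc a b)) (himp : ∀ x ∈ Icc a b, g x ≤ 0 → f x ≤ 0)
    (hgap : ∀ s t, a ≤ s → s < t → t ≤ b → ∫ x in s..t, g x = 0 → ∫ x in s..t, f x ≤ 0)
    {τ : ℝ} (hτ : τ ∈ runningMinSet (fun t => ∫ x in a..t, g x) a b) :
    ∫ x in a..τ, f x ≤ 0 := by
  set G := fun t => ∫ x in a..t, g x
  set T := runningMinSet G a b
  have hGc : ContinuousOn G (Icc a b) := continuousOn_primitive_of_le hab hg
  have hTc : IsClosed T := isClosed_runningMinSet hGc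
  have haT : a ∈ T := left_mem_runningMinSet hab
  have hsplit : Icc a τ = (T ∩ Icc a τ) ∪ (Ioo a τ \ T) := by
    ext x
    refine ⟨fun hx => ?_, fun hx => hx.elim (fun h => h.2) fun h => Ioo_subset_Icc_self h.1⟩
    by_cases hxT : x ∈ T
    · exact Or.inl ⟨hxT, hx⟩
    · exact Or.inr ⟨⟨hx.1.lt_of_ne' fun h => hxT (h ▸ haT), hx.2.lt_of_ne fun h => hxT (h ▸ hτ)⟩,
        hxT⟩
  have hdisj : Disjoint (T ∩ Icc a τ) (Ioo a τ \ T) :=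
    Set.disjoint_left.2 fun x hx hx' => hx'.2 hx.1
  have hfτ : IntegrableOn f (Icc a τ) := hf.mono_set (Icc_subset_Icc_right hτ.1.2)
  rw [intervalIntegral.integral_of_le hτ.1.1, ← integral_Icc_eq_integral_Ioc, hsplit,
    setIntegral_union hdisj (measurableSet_Ioo.diff hTc.measurableSet)
      (hfτ.mono_set inter_subset_right) (hfτ.mono_set (sdiff_subset.trans Ioo_subset_Icc_self))]
  refine add_nonpos (setIntegral_nonpos_of_ae_restrict ?_) ?_
  · filter_upwards [ae_restrict_mem (hTc.measurableSet.inter measurableSet_Icc),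
      ae_restrict_of_ae (ae_nonpos_of_mem_runningMinSet hab hg)] with x hx hgx
    exact himp x hx.1.1 (hgx hx.1)
  · refine setIntegral_Ioo_diff_nonpos hTc haT hτ hfτ fun p hp hap hpτ => ?_
    have hgi : ∀ t ∈ Icc a b, IntervalIntegrable g volume a t :=
      fun t ht => hg.intervalIntegrable_of_mem_Icc (left_mem_Icc.2 hab) ht
    rw [← integral_Ioc_eq_integral_Ioo, ← intervalIntegral.integral_of_le hp.2.2.1.le]
    refine hgap _ _ hap hp.2.2.1 (hpτ.trans hτ.1.2) ?_
    rw [← intervalIntegral.integral_interval_sub_left (hgi _ hp.2.1.1) (hgi _ hp.1.1)]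
    exact sub_eq_zero.2 (apply_snd_eq_fst_of_mem_gaps hGc hp)

/-- Rising sun argument: split `[a, b]` at the first point `σ` where `∫ g` reaches its final
value; `σ` is a running minimum, and `∫ g = 0` on `[σ, b]`. -/
theorem integral_nonpos_of_forall_subinterval (hab : a ≤ b) (hf : IntegrableOn f (Icc a b))
    (hg : IntegrableOn g (Icc a b)) (himp : ∀ x ∈ Icc a b, g x ≤ 0 → f x ≤ 0)
    (hG : ∫ x in a..b, g x ≤ 0)
    (hgap : ∀ s t, a ≤ s → s < t → t ≤ b → ∫ x in s..t, g x = 0 → ∫ x in s..t, f x ≤ 0) :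
    ∫ x in a..b, f x ≤ 0 := by
  set G := fun t => ∫ x in a..t, g x
  have hGc : ContinuousOn G (Icc a b) := continuousOn_primitive_of_le hab hg
  obtain ⟨σ, hσ, hGσ⟩ := exists_mem_runningMinSet_eq hab hGc (by simpa [G] using hG)
  have ha : a ∈ Icc a b := left_mem_Icc.2 hab
  have hb : b ∈ Icc a b := right_mem_Icc.2 hab
  rw [← intervalIntegral.integral_add_adjacent_intervals (hf.intervalIntegrable_of_mem_Icc ha hσ.1)
    (hf.intervalIntegrable_of_mem_Icc hσ.1 hb)]
  refine add_nonpos (integral_nonpos_of_mem_runningMinSet hab hf hg himp hgap hσ) ?_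
  rcases hσ.1.2.eq_or_lt with rfl | hσb
  · simp
  · refine hgap σ b hσ.1.1 hσb le_rfl ?_
    rw [← intervalIntegral.integral_interval_sub_left (hg.intervalIntegrable_of_mem_Icc ha hb)
      (hg.intervalIntegrable_of_mem_Icc ha hσ.1)]
    exact sub_eq_zero.2 hGσ.symm

end RisingSun

section Oscillation

variable {Q φ : ℝ → ℝ}

theorem integral_comp_sub_le_of_minimizer_lt (hQ : ConvexOn ℝ univ Q) (hQe : ∀ t, Q (-t) = Q t)
    (hφ : Measurable φ) {a b c₀ c ε M : ℝ} (hab : a ≤ b)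
    (hrange : ∀ x ∈ Icc a b, φ x ∈ Icc (c - ε) M)
    (hmin : ∀ c', ∫ x in a..b, Q (φ x - c₀) ≤ ∫ x in a..b, Q (φ x - c')) (hc₀ : c₀ < c)
    (hloc : ∀ s t, a ≤ s → s < t → t ≤ b → ∃ d, ∫ x in s..t, Q (φ x - d) < Q ε * (t - s)) :
    ∫ x in a..b, Q (φ x - c) ≤ Q ε * (b - a) := by
  have hQi : ∀ d, IntegrableOn (fun x => Q (φ x - d)) (Icc a b) := fun d =>
    hQ.integrableOn_comp (hφ.sub_const d) fun x hx =>
      ⟨sub_le_sub_right (hrange x hx).1 d, sub_le_sub_right (hrange x hx).2 d⟩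
  have hu : ∀ x ∈ Icc a b, φ x - c ∈ Icc (-ε) (M - c) := fun x hx =>
    ⟨by linarith [(hrange x hx).1], sub_le_sub_right (hrange x hx).2 c⟩
  have hgi := hQ.integrableOn_leftDeriv_comp (hφ.sub_const c) hu
  have hsubint : ∀ {s t}, a ≤ s → s ≤ t → t ≤ b → ∀ {h : ℝ → ℝ}, IntegrableOn h (Icc a b) →
      IntervalIntegrable h volume s t := fun hs hst ht _ hh =>
    hh.intervalIntegrable_of_mem_Icc ⟨hs, hst.trans ht⟩ ⟨hs.trans hst, ht⟩
  have hfint : ∀ {s t}, a ≤ s → s ≤ t → t ≤ b →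
      ∫ x in s..t, (Q (φ x - c) - Q ε) = (∫ x in s..t, Q (φ x - c)) - Q ε * (t - s) :=
    fun hs hst ht => by
      rw [intervalIntegral.integral_sub (hsubint hs hst ht (hQi c)) intervalIntegrable_const,
        intervalIntegral.integral_const, smul_eq_mul, mul_comm]
  have hI := hQ.convexOn_integral_comp_sub hab fun d => hsubint le_rfl hab le_rfl (hQi d)
  have hG : ∫ x in a..b, leftDeriv Q (φ x - c) ≤ 0 := by
    refine hQ.integral_leftDeriv_comp_nonpos hab (hφ.sub_const c) hu fun δ hδ => ?_
    simp only [sub_sub]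
    exact hI.le_right_of_left_le trivial trivial
      (by rw [openSegment_eq_Ioo (by linarith)]; exact ⟨hc₀, by linarith⟩) (hmin c)
  have key := integral_nonpos_of_forall_subinterval (f := fun x => Q (φ x - c) - Q ε) hab
    ((hQi c).sub (integrableOn_const measure_Icc_lt_top.ne)) hgi
    (fun x hx hgx => sub_nonpos.2 (hQ.le_of_leftDeriv_nonpos hQe (hu x hx).1 hgx)) hG
    fun s t hs hst ht hg0 => by
      obtain ⟨d, hd⟩ := hloc s t hs hst ht
      have := hQ.integral_comp_sub_le_of_integral_leftDeriv_eq_zero hst.le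
        (hsubint hs hst.le ht (hQi c)) (hsubint hs hst.le ht (hQi d)) (hsubint hs hst.le ht hgi) hg0
      rw [hfint hs hst.le ht]
      linarith
  rw [hfint le_rfl hab le_rfl] at key
  linarith

lemma Vc_Icc_eq (hQ0 : ∀ t, 0 ≤ Q t) {s t c : ℝ} (hst : s < t)
    (hint : IntegrableOn (fun x => Q (φ x - c)) (Icc s t)) :
    Vc Q φ (Icc s t) c = ENNReal.ofReal ((∫ x in s..t, Q (φ x - c)) / (t - s)) := by
  rw [Vc, avg, Real.volume_Icc, ← ofReal_integral_eq_lintegral_ofReal hint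
    (ae_of_all _ fun x => hQ0 _), integral_Icc_eq_integral_Ioc,
    ← intervalIntegral.integral_of_le hst.le, ENNReal.ofReal_div_of_pos (sub_pos.2 hst),
    ENNReal.div_eq_inv_mul]

lemma exists_integral_lt_of_W_lt (hQ0 : ∀ t, 0 ≤ Q t) {a b r : ℝ}
    (hint : ∀ c, IntegrableOn (fun x => Q (φ x - c)) (Icc a b))
    (hW : W Q φ (Icc a b) < ENNReal.ofReal r) {s t : ℝ} (hs : a ≤ s) (hst : s < t) (ht : t ≤ b) :
    ∃ d, ∫ x in s..t, Q (φ x - d) < r * (t - s) := by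
  have hVW : V Q φ (Icc s t) ≤ W Q φ (Icc a b) :=
    le_iSup₂_of_le s t (le_iSup (fun _ => V Q φ (Icc s t)) (Icc_subset_Icc hs ht))
  obtain ⟨d, hd⟩ := iInf_lt_iff.1 (hVW.trans_lt hW)
  rw [Vc_Icc_eq hQ0 hst ((hint d).mono_set (Icc_subset_Icc hs ht)),
    ENNReal.ofReal_lt_ofReal_iff', div_lt_iff₀ (sub_pos.2 hst)] at hd
  exact ⟨d, hd.1⟩

/-- `CC` is an `epsilon` choice, so a minimizer has to be exhibited first: clamping `c` to
`[A, B]` can only decrease the integral, and on `[A, B]` a minimizer exists by compactness. -/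
lemma integral_comp_sub_CC_le (hQ : ConvexOn ℝ univ Q) (hQe : ∀ t, Q (-t) = Q t)
    (hQ0 : ∀ t, 0 ≤ Q t) {A B a b : ℝ} (hAB : A ≤ B) (hab : a < b)
    (hrange : ∀ x ∈ Icc a b, φ x ∈ Icc A B)
    (hint : ∀ c, IntegrableOn (fun x => Q (φ x - c)) (Icc a b)) (c : ℝ) :
    ∫ x in a..b, Q (φ x - CC Q φ (Icc a b)) ≤ ∫ x in a..b, Q (φ x - c) := by
  set I := fun c => ∫ x in a..b, Q (φ x - c)
  have hIi : ∀ c, IntervalIntegrable (fun x => Q (φ x - c)) volume a b := fun c =>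
    (hint c).intervalIntegrable_of_mem_Icc (left_mem_Icc.2 hab.le) (right_mem_Icc.2 hab.le)
  have hI : Continuous I := (hQ.convexOn_integral_comp_sub hab.le hIi).continuous_of_univ
  obtain ⟨c₀, -, hc₀⟩ := isCompact_Icc.exists_isMinOn (nonempty_Icc.2 hAB) hI.continuousOn
  have hmin : ∀ c, I c₀ ≤ I c := fun c =>
    (hc₀ (projIcc A B hAB c).2).trans <| intervalIntegral.integral_mono_on hab.le (hIi _) (hIi _)
      fun x hx => hQ.le_of_abs_le hQe <| by
        simpa [projIcc_of_mem hAB (hrange x hx)] using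
          abs_projIcc_sub_projIcc hAB (c := φ x) (d := c)
  have hVc : ∀ c, Vc Q φ (Icc a b) c = ENNReal.ofReal (I c / (b - a)) :=
    fun c => Vc_Icc_eq hQ0 hab (hint c)
  have hCC : ∀ c, Vc Q φ (Icc a b) (CC Q φ (Icc a b)) ≤ Vc Q φ (Icc a b) c :=
    Classical.epsilon_spec (p := fun c => ∀ c', Vc Q φ (Icc a b) c ≤ Vc Q φ (Icc a b) c')
      ⟨c₀, fun c => by
        rw [hVc, hVc]
        exact ENNReal.ofReal_le_ofReal (div_le_div_of_nonneg_right (hmin c) (sub_pos.2 hab).le)⟩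
  have h := hCC c
  rw [hVc, hVc, ENNReal.ofReal_le_ofReal_iff (div_nonneg
      (intervalIntegral.integral_nonneg hab.le fun x _ => hQ0 _) (sub_pos.2 hab).le),
    div_le_div_iff_of_pos_right (sub_pos.2 hab)] at h
  exact h

end Oscillation

theorem stmt10_general (Q : ℝ → ℝ) (hQ : StrictConvexOn ℝ univ Q) (hQe : ∀ t, Q (-t) = Q t)
    (hQ0 : ∀ t, 0 ≤ Q t) (A B ε : ℝ) (hAB : A ≤ B)
    (φ : ℝ → ℝ) (hφ : Measurable φ) (a b : ℝ) (hab : a < b)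
    (hrange : ∀ x ∈ Icc a b, φ x ∈ Icc A B)
    (hW : W Q φ (Icc a b) < ENNReal.ofReal (Q ε)) :
    (A + ε ≤ CC Q φ (Icc a b) ∨ Vc Q φ (Icc a b) (A + ε) ≤ ENNReal.ofReal (Q ε))
    ∧ (CC Q φ (Icc a b) ≤ B - ε ∨ Vc Q φ (Icc a b) (B - ε) ≤ ENNReal.ofReal (Q ε)) := by
  have hQc := hQ.convexOn
  have hint : ∀ c, IntegrableOn (fun x => Q (φ x - c)) (Icc a b) := fun c =>
    hQc.integrableOn_comp (hφ.sub_const c) fun x hx =>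
      ⟨sub_le_sub_right (hrange x hx).1 c, sub_le_sub_right (hrange x hx).2 c⟩
  have hmin := integral_comp_sub_CC_le hQc hQe hQ0 hAB hab hrange hint
  have hloc := fun s t => exists_integral_lt_of_W_lt hQ0 hint hW (s := s) (t := t)
  have hVc_le : ∀ c, ∫ x in a..b, Q (φ x - c) ≤ Q ε * (b - a) →
      Vc Q φ (Icc a b) c ≤ ENNReal.ofReal (Q ε) := fun c h => by
    rw [Vc_Icc_eq hQ0 hab (hint c)]
    exact ENNReal.ofReal_le_ofReal ((div_le_iff₀ (sub_pos.2 hab)).2 h)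
  have hneg : ∀ c s t, ∫ x in s..t, Q (-φ x - c) = ∫ x in s..t, Q (φ x - -c) := fun c s t =>
    intervalIntegral.integral_congr fun x _ => by rw [← hQe]; ring_nf
  refine ⟨(le_or_gt (A + ε) _).imp_right fun h => hVc_le _ ?_,
    (le_or_gt _ (B - ε)).imp_right fun h => hVc_le _ ?_⟩
  · exact integral_comp_sub_le_of_minimizer_lt hQc hQe hφ hab.le
      (fun x hx => ⟨by linarith [(hrange x hx).1], (hrange x hx).2⟩) hmin h hloc
  · have := integral_comp_sub_le_of_minimizer_lt (φ := fun x => -φ x) (c₀ := -CC Q φ (Icc a b))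
      (c := -(B - ε)) (ε := ε) (M := -A) hQc hQe hφ.neg hab.le
      (fun x hx => ⟨by linarith [(hrange x hx).2], by linarith [(hrange x hx).1]⟩)
      (fun c' => by simpa only [hneg, neg_neg] using hmin (-c')) (neg_lt_neg h)
      fun s t hs hst ht => by
        obtain ⟨d, hd⟩ := hloc s t hs hst ht
        exact ⟨-d, by rwa [hneg, neg_neg]⟩
    rwa [hneg, neg_neg] at this

theorem stmt10 (Q : ℝ → ℝ) (hQ : StrictConvexOn ℝ univ Q) (hQe : ∀ t, Q (-t) = Q t)
    (hQ0 : ∀ t, 0 ≤ Q t) (A B ε : ℝ) (hAB : A ≤ B) (hε : 0 < ε)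
    (φ : ℝ → ℝ) (hφ : Measurable φ) (a b : ℝ) (hab : a < b)
    (hrange : ∀ x ∈ Icc a b, φ x ∈ Icc A B)
    (hW : W Q φ (Icc a b) < ENNReal.ofReal (Q ε)) :
    (A + ε ≤ CC Q φ (Icc a b) ∨ Vc Q φ (Icc a b) (A + ε) ≤ ENNReal.ofReal (Q ε))
    ∧ (CC Q φ (Icc a b) ≤ B - ε ∨ Vc Q φ (Icc a b) (B - ε) ≤ ENNReal.ofReal (Q ε)) :=
  stmt10_general Q hQ hQe hQ0 A B ε hAB φ hφ a b hab hrange hW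
end
end
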